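/- arXiv:1412.1069 — 4 statements merged into one kernel-verified Lean document; each statement's English description precedes it below -/
import Mathlib

section
/- Let P be any query plan for a Boolean self-join-free conjunctive query q. Then for every tuple-independent probabilistic database D, P(q) ≤ score(P). -/
open scoped Classical

namespace PDB

noncomputable section

/-! ### Monotone DNF formulas over a finite variable set -/

/-- Probability that a monotone DNF formula (given by its finite set of implicants, each a
finite set of positive variables) is true, when each variable `x` is independently true with
probability `p x`. -/
def dnfProb {X : Type*} [Fintype X] (p : X → ℝ) (F : Finset (Finset X)) : ℝ :=
  ∑ ω : X → Bool,
    (∏ x : X, if ω x = true then p x else 1 - p x) *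
      (if ∃ T ∈ F, ∀ x ∈ T, ω x = true then 1 else 0)

/-- A prime implicant of a monotone DNF formula: a minimal implicant. -/
def IsPrimeImplicant {X : Type*} (F : Finset (Finset X)) (T : Finset X) : Prop :=
  T ∈ F ∧ ∀ S ∈ F, S ⊆ T → S = T

variable {A V dom : Type*}

/-! ### Self-join-free conjunctive queries: hierarchy and connectivity.
A self-join-free conjunctive query is given by its atoms: a family `atoms : A → Finset V`
assigning to each of the (pairwise distinct) relation symbols its finite set of variables;
`H` denotes the set of head variables (treated as constants); all other variables are
existential.  A Boolean query has `H = ∅`. -/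

/-- `at(x)`: the atoms among `S` that contain the variable `x`. -/
def atOf (atoms : A → Finset V) (S : Finset A) (x : V) : Finset A :=
  S.filter (fun i => x ∈ atoms i)

/-- The query consisting of the atoms `S` is hierarchical, with the variables in `H`
treated as constants (head variables): for any two existential variables, their atom sets
are comparable or disjoint. -/
def HierOn (atoms : A → Finset V) (S : Finset A) (H : Finset V) : Prop :=
  ∀ x : V, x ∉ H → ∀ y : V, y ∉ H →
    atOf atoms S x ⊆ atOf atoms S y ∨ atOf atoms S x ∩ atOf atoms S y = ∅ ∨
      atOf atoms S y ⊆ atOf atoms S x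

/-- A Boolean query (with all its atoms) is hierarchical. -/
def Hier [Fintype A] (atoms : A → Finset V) : Prop :=
  HierOn atoms Finset.univ ∅

/-- The set of atoms `S` is disconnected: it can be partitioned into two nonempty sets
sharing no variables. -/
def Disconn (atoms : A → Finset V) (S : Finset A) : Prop :=
  ∃ T : Finset A, T ⊆ S ∧ T.Nonempty ∧ (S \ T).Nonempty ∧
    ∀ i ∈ T, ∀ j ∈ S \ T, atoms i ∩ atoms j = ∅

/-- `T` is a connected component of the set of atoms `S`: a maximal connected subset. -/
def IsComp (atoms : A → Finset V) (S T : Finset A) : Prop :=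
  T ⊆ S ∧ T.Nonempty ∧ ¬ Disconn atoms T ∧
    ∀ U : Finset A, T ⊆ U → U ⊆ S → ¬ Disconn atoms U → U = T

/-- `xs` is a cut-set of the query with atoms `S`: a set of its variables whose removal
disconnects the query. -/
def IsCutSet (atoms : A → Finset V) (S : Finset A) (xs : Finset V) : Prop :=
  xs ⊆ S.sup atoms ∧ Disconn (fun i => atoms i \ xs) S

/-- a minimal cut-set (min-cut-set) -/
def MinCut (atoms : A → Finset V) (S : Finset A) (xs : Finset V) : Prop :=
  IsCutSet atoms S xs ∧ ∀ ys : Finset V, ys ⊂ xs → ¬ IsCutSet atoms S ys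

/-- the separator variables of a Boolean query: the variables occurring in every atom -/
def SepVars [Fintype A] [Fintype V] (atoms : A → Finset V) : Finset V :=
  Finset.univ.filter (fun x => ∀ i : A, x ∈ atoms i)

/-- the set of variables of a query -/
def varsOf [Fintype A] (atoms : A → Finset V) : Finset V :=
  Finset.univ.sup atoms

/-! ### Dissociations -/

/-- `Δ` is a dissociation of the query with atoms `atoms` and head variables `H`:
each atom receives extra existential variables of the query that it does not already
contain. -/
def IsDiss [Fintype A] (atoms : A → Finset V) (H : Finset V) (Δ : A → Finset V) : Prop :=
  ∀ i : A, Δ i ⊆ (varsOf atoms \ H) \ atoms i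

/-- the atoms of the dissociated query `q^Δ` -/
def dissAtoms (atoms Δ : A → Finset V) : A → Finset V := fun i => atoms i ∪ Δ i

/-- the partial dissociation order `Δ ≼ Δ'` -/
def dissLE (Δ Δ' : A → Finset V) : Prop := ∀ i : A, Δ i ⊆ Δ' i

/-- a safe dissociation: the dissociated query is hierarchical -/
def SafeDiss [Fintype A] (atoms : A → Finset V) (H : Finset V) (Δ : A → Finset V) : Prop :=
  IsDiss atoms H Δ ∧ HierOn (dissAtoms atoms Δ) Finset.univ H

/-- a minimal safe dissociation: no smaller dissociation (in the order `≼`) is safe -/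
def MinSafeDiss [Fintype A] (atoms : A → Finset V) (H : Finset V) (Δ : A → Finset V) : Prop :=
  SafeDiss atoms H Δ ∧
    ∀ Δ' : A → Finset V, SafeDiss atoms H Δ' → dissLE Δ' Δ → Δ' = Δ

/-! ### Tuple-independent probabilistic databases -/

/-- A tuple-independent probabilistic database for the query with atoms `atoms` over the
finite domain `dom`: each relation `i` is a finite set of tuples (functions from the
variables of the atom to the domain), each carrying a probability. -/
structure DB (atoms : A → Finset V) (dom : Type*) where
  tuples : ∀ i : A, Finset ({x // x ∈ atoms i} → dom)
  prob : ∀ i : A, ({x // x ∈ atoms i} → dom) → ℝ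

/-- all tuple probabilities lie in [0,1] -/
def DB.Valid {atoms : A → Finset V} (D : DB atoms dom) : Prop :=
  ∀ i : A, ∀ t ∈ D.tuples i, 0 ≤ D.prob i t ∧ D.prob i t ≤ 1

/-- the restriction of a valuation of all variables to the tuple format of atom `i` -/
def restrict (atoms : A → Finset V) (i : A) (ν : V → dom) : {x // x ∈ atoms i} → dom :=
  fun x => ν x.1

/-- restriction of a tuple to a smaller variable set -/
def restrictTup {xs ys : Finset V} (h : xs ⊆ ys) (t : {x // x ∈ ys} → dom) :
    {x // x ∈ xs} → dom :=
  fun x => t ⟨x.1, h x.2⟩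

/-- `P(q)`: the probability that the Boolean query with atoms `atoms` is true in a possible
world chosen by independently including each tuple `t` of `D` with probability `p(t)`. -/
def queryProb [Fintype A] (atoms : A → Finset V) (D : DB atoms dom) : ℝ :=
  ∑ W : ∀ i : A, {t // t ∈ D.tuples i} → Bool,
    (∏ i : A, ∏ t : {t // t ∈ D.tuples i},
        if W i t = true then D.prob i t.1 else 1 - D.prob i t.1) *
      (if ∃ ν : V → dom, ∀ i : A,
            ∃ h : restrict atoms i ν ∈ D.tuples i, W i ⟨restrict atoms i ν, h⟩ = true
        then 1 else 0)

/-- The dissociated database `D^Δ`: relation `R_i^{ȳ_i}` contains one copy of each tuple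
`t ∈ R_i` for every assignment of the added variables `ȳ_i` to domain values, with the same
probability as `t`. -/
def dissDB [Fintype dom] (atoms Δ : A → Finset V) (D : DB atoms dom) :
    DB (dissAtoms atoms Δ) dom where
  tuples i := Finset.univ.filter
    (fun t : {x // x ∈ dissAtoms atoms Δ i} → dom =>
      restrictTup (show atoms i ⊆ dissAtoms atoms Δ i from Finset.subset_union_left) t
        ∈ D.tuples i)
  prob i t :=
    D.prob i
      (restrictTup (show atoms i ⊆ dissAtoms atoms Δ i from Finset.subset_union_left) t)

/-- `P(q^Δ)`: the probability of the dissociated query on the dissociated database. -/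
def dissProb [Fintype A] [Fintype dom] (atoms Δ : A → Finset V) (D : DB atoms dom) : ℝ :=
  queryProb (dissAtoms atoms Δ) (dissDB atoms Δ D)

/-- The propagation score `ρ(q)`: the minimum of `P(q^Δ)` over all safe dissociations. -/
def propScore [Fintype A] [Fintype dom] (atoms : A → Finset V)
    (D : DB atoms dom) : ℝ :=
  sInf { r : ℝ | ∃ Δ : A → Finset V, SafeDiss atoms ∅ Δ ∧ r = dissProb atoms Δ D }

/-- the database with all tuple probabilities scaled by the factor `f` -/
def scaleDB {atoms : A → Finset V} (D : DB atoms dom) (f : ℝ) : DB atoms dom where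
  tuples := D.tuples
  prob i t := f * D.prob i t

/-- relation `i` is deterministic: all its tuples have probability 1 (otherwise it is
probabilistic) -/
def Deterministic {atoms : A → Finset V} (D : DB atoms dom) (i : A) : Prop :=
  ∀ t ∈ D.tuples i, D.prob i t = 1

/-- The lineage `F_{q,D}` of the Boolean query on `D`: the monotone DNF over the tuples of
`D` whose implicants correspond to the satisfying assignments of the query. -/
def lineage [Fintype A] [Fintype V] [Fintype dom] (atoms : A → Finset V)
    (D : DB atoms dom) :
    Finset (Finset (Σ i : A, {x // x ∈ atoms i} → dom)) :=
  ((Finset.univ : Finset (V → dom)).filter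
      (fun ν => ∀ i : A, restrict atoms i ν ∈ D.tuples i)).image
    (fun ν => Finset.univ.image
      (fun i : A => (⟨i, restrict atoms i ν⟩ : Σ i : A, {x // x ∈ atoms i} → dom)))

/-- The substitution `θ : D^Δ → D` mapping every tuple of a dissociated relation
`R_i^{ȳ_i}` to its projection onto the original variables of `R_i`. -/
def dissTupleMap (atoms Δ : A → Finset V) :
    (Σ i : A, {x // x ∈ dissAtoms atoms Δ i} → dom) →
      Σ i : A, {x // x ∈ atoms i} → dom :=
  fun t =>
    ⟨t.1, restrictTup (show atoms t.1 ⊆ dissAtoms atoms Δ t.1 from Finset.subset_union_left)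
      t.2⟩

/-! ### Functional dependencies -/

/-- `Determines Γ xs y`: the variable `y` is in the closure `xs⁺` of `xs` under the
functional dependencies `Γ`. -/
inductive Determines (Γ : Set (Finset V × V)) : Finset V → V → Prop
  | mem (xs : Finset V) (y : V) (h : y ∈ xs) : Determines Γ xs y
  | step (xs : Finset V) (fd : Finset V × V) (hfd : fd ∈ Γ)
      (hall : ∀ z ∈ fd.1, Determines Γ xs z) : Determines Γ xs fd.2

/-- The functional dependency `fd` is an FD on the attributes of relation `j` that holds
in the database `D`. -/
def FDHolds (atoms : A → Finset V) (D : DB atoms dom) (j : A) (fd : Finset V × V) : Prop :=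
  ∃ h1 : fd.1 ⊆ atoms j, ∃ h2 : fd.2 ∈ atoms j,
    ∀ t ∈ D.tuples j, ∀ t' ∈ D.tuples j,
      (∀ v : V, ∀ hv : v ∈ fd.1, t ⟨v, h1 hv⟩ = t' ⟨v, h1 hv⟩) →
        t ⟨fd.2, h2⟩ = t' ⟨fd.2, h2⟩

/-! ### Query plans -/

/-- Query plans: atoms, duplicate-eliminating projections (given by the retained head
variables), and k-ary natural joins. -/
inductive Plan (A V : Type*) where
  | atom : A → Plan A V
  | proj : Finset V → Plan A V → Plan A V
  | join : List (Plan A V) → Plan A V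

namespace Plan

/-- the head variables of a plan -/
def hvar (atoms : A → Finset V) : Plan A V → Finset V
  | .atom i => atoms i
  | .proj hv _ => hv
  | .join Ps => Ps.attach.foldr (fun P acc => hvar atoms P.1 ∪ acc) ∅
decreasing_by
  all_goals simp_wf
  all_goals try have := List.sizeOf_lt_of_mem P.2
  all_goals omega

/-- the multiset of atoms used by a plan -/
def atomsOf : Plan A V → Multiset A
  | .atom i => {i}
  | .proj _ P => atomsOf P
  | .join Ps => Ps.attach.foldr (fun P acc => atomsOf P.1 + acc) 0
decreasing_by
  all_goals simp_wf
  all_goals try have := List.sizeOf_lt_of_mem P.2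
  all_goals omega

def isProj : Plan A V → Prop
  | .proj _ _ => True
  | _ => False

def isJoin : Plan A V → Prop
  | .join _ => True
  | _ => False

/-- structural well-formedness: projections only retain available variables, joins are at
least binary, and joins and projections alternate -/
def WF (atoms : A → Finset V) : Plan A V → Prop
  | .atom _ => True
  | .proj hv P => hv ⊆ hvar atoms P ∧ ¬ isProj P ∧ WF atoms P
  | .join Ps => 2 ≤ Ps.length ∧ ∀ P ∈ Ps, ¬ isJoin P ∧ WF atoms P
decreasing_by
  all_goals simp_wf
  all_goals try rename_i h; try have := List.sizeOf_lt_of_mem h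
  all_goals omega

/-- a safe plan: at every join, all subplans have the same head variables -/
def Safe (atoms : A → Finset V) : Plan A V → Prop
  | .atom _ => True
  | .proj _ P => Safe atoms P
  | .join Ps => (∀ P ∈ Ps, Safe atoms P) ∧
      ∀ P ∈ Ps, ∀ Q ∈ Ps, hvar atoms P = hvar atoms Q
decreasing_by
  all_goals simp_wf
  all_goals try rename_i h; try have := List.sizeOf_lt_of_mem h
  all_goals omega

/-- `P` is a (well-formed) query plan for the query with atoms `atoms` and head variables
`H`: it uses every atom exactly once and its output head variables are exactly `H`
(for a Boolean query, `H = ∅`, i.e. all existential variables are projected away). -/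
def IsPlanFor [Fintype A] (atoms : A → Finset V) (H : Finset V) (P : Plan A V) : Prop :=
  WF atoms P ∧ atomsOf P = (Finset.univ : Finset A).val ∧ hvar atoms P = H

/-- the join variables: the union of the head variables of a list of subplans -/
def joinVars (atoms : A → Finset V) (Ps : List (Plan A V)) : Finset V :=
  (Ps.map (hvar atoms)).foldr (· ∪ ·) ∅

/-- Identification of plans up to join order, flattening of nested joins, and removal of
trivial (identity) projections. -/
inductive Equiv (atoms : A → Finset V) : Plan A V → Plan A V → Prop
  | refl (P) : Equiv atoms P P
  | symm {P Q} : Equiv atoms P Q → Equiv atoms Q P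
  | trans {P Q R} : Equiv atoms P Q → Equiv atoms Q R → Equiv atoms P R
  | projCongr (hv) {P Q} : Equiv atoms P Q → Equiv atoms (.proj hv P) (.proj hv Q)
  | joinCongr {Ps Qs} : List.Forall₂ (Equiv atoms) Ps Qs →
      Equiv atoms (.join Ps) (.join Qs)
  | joinPerm {Ps Qs} : Ps.Perm Qs → Equiv atoms (.join Ps) (.join Qs)
  | joinFlatten (Ps Qs Rs) :
      Equiv atoms (.join (Ps ++ .join Qs :: Rs)) (.join (Ps ++ Qs ++ Rs))
  | projTriv {P} (hv) (h : hv = hvar atoms P) : Equiv atoms (.proj hv P) P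

/-- The extensional score semantics of a plan evaluated on the database `D`: output tuples
are represented by total valuations `ν : V → dom` (only the values on the head variables
matter; duplicates are represented canonically by the default value `d₀` outside the head
variables).  Joins multiply scores, and duplicate-eliminating projections combine the
scores `s_1, …, s_n` of the tuples projecting to a common output tuple to
`1 - ∏ (1 - s_i)`. -/
def score [Fintype V] [Fintype dom] (atoms : A → Finset V) (D : DB atoms dom) (d₀ : dom) :
    Plan A V → (V → dom) → ℝ
  | .atom i, ν =>
      if restrict atoms i ν ∈ D.tuples i then D.prob i (restrict atoms i ν) else 0
  | .proj hv P, ν =>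
      1 - ∏ μ ∈ Finset.univ.filter (fun μ : V → dom =>
            (∀ v : V, v ∉ hvar atoms P → μ v = d₀) ∧ ∀ v ∈ hv, μ v = ν v),
          (1 - score atoms D d₀ P μ)
  | .join Ps, ν => (Ps.attach.map (fun P => score atoms D d₀ P.1 ν)).prod
decreasing_by
  all_goals simp_wf
  all_goals try have := List.sizeOf_lt_of_mem P.2
  all_goals omega

/-- the score of a Boolean plan -/
def bscore [Fintype V] [Fintype dom] [Inhabited dom] (atoms : A → Finset V)
    (D : DB atoms dom) (P : Plan A V) : ℝ :=
  score atoms D default P (fun _ => default)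

/-- Dropping the dissociated variables from a plan (for a dissociated query) to obtain the
corresponding plan `P^Δ` for the original query: every projection list is restricted to
the variables actually available in the original query. -/
def eraseTo (atoms : A → Finset V) : Plan A V → Plan A V
  | .atom i => .atom i
  | .proj hv P => .proj (hv ∩ hvar atoms (eraseTo atoms P)) (eraseTo atoms P)
  | .join Ps => .join (Ps.attach.map (fun P => eraseTo atoms P.1))
decreasing_by
  all_goals simp_wf
  all_goals try have := List.sizeOf_lt_of_mem P.2
  all_goals omega

/-- The dissociation `Δ^P` corresponding to a plan `P`: for each join operator with join
variables `JVar = ⋃_j HVar(P_j)`, every relation occurring in subplan `P_j` receives the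
variables `JVar ∖ HVar(P_j)`. -/
def dissOf (atoms : A → Finset V) : Plan A V → A → Finset V
  | .atom _ => fun _ => ∅
  | .proj _ P => dissOf atoms P
  | .join Ps => fun i =>
      Ps.attach.foldr (fun P acc =>
        (if i ∈ atomsOf P.1 then
            (joinVars atoms Ps \ hvar atoms P.1) ∪ dissOf atoms P.1 i
          else ∅) ∪ acc) ∅
decreasing_by
  all_goals simp_wf
  all_goals try have := List.sizeOf_lt_of_mem P.2
  all_goals omega

end Plan

/-- The recursive algorithm `MP` enumerating the minimal query plans of the query with
atom set `S` and head variables `H` (head variables are treated as constants):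
* if the query has a single atom, return the projection of that atom onto the head
  variables;
* if the query (after removing the head variables) is disconnected, return any join of
  minimal plans of its connected components (each component keeping the head variables
  occurring in it);
* otherwise, for any minimal cut-set `ys` of the query minus its head variables, return
  the plan projecting `ys` away from any minimal plan of the query with head variables
  `H ∪ ys`. -/
inductive MPrel (atoms : A → Finset V) : Finset A → Finset V → Plan A V → Prop
  | single (i : A) (H : Finset V) : MPrel atoms {i} H (.proj H (.atom i))
  | disc (S : Finset A) (H : Finset V) (parts : List (Finset A)) (Ps : List (Plan A V))
      (hdup : parts.Nodup) (hlen : 2 ≤ parts.length)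
      (hparts : ∀ T : Finset A, T ∈ parts ↔ IsComp (fun i => atoms i \ H) S T)
      (hlen2 : parts.length = Ps.length)
      (hPs : ∀ n : ℕ, ∀ h1 : n < parts.length, ∀ h2 : n < Ps.length,
        MPrel atoms parts[n] (H ∩ (parts[n]).sup atoms) Ps[n]) :
      MPrel atoms S H (.join Ps)
  | conn (S : Finset A) (H : Finset V) (ys : Finset V) (P : Plan A V)
      (hcard : 2 ≤ S.card)
      (hconn : ¬ Disconn (fun i => atoms i \ H) S)
      (hcut : MinCut (fun i => atoms i \ H) S ys)
      (hP : MPrel atoms S (H ∪ ys) P) :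
      MPrel atoms S H (.proj H P)

/-!
A possible world is a point of the Boolean cube indexed by the tuples of `D`, weighted by the
product measure. For a subplan `P` and a valuation `ν`, the event "`ν` is an output tuple of
`P`" is increasing in the world and depends only on the tuples of the relations used by `P`.
At a join the subplans use disjoint sets of relations (the query is self-join-free), so their
events are independent and the join event lies in their intersection: its probability is at
most the product of theirs. At a projection the event lies in the union of the events of the
tuples being projected, and by the Harris inequality increasing events are positively
correlated, so this union has probability at most `1 - ∏ (1 - pᵢ)`. Induction over the plan
then bounds `P(q)` by the score.
-/

section BooleanCube

variable {ι : Type*} [Fintype ι] (p : ι → ℝ)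

def cubeWeight (ω : ι → Bool) : ℝ := ∏ i, if ω i then p i else 1 - p i

def cubeExpect (f : (ι → Bool) → ℝ) : ℝ := ∑ ω, cubeWeight p ω * f ω

def cubeProb (E : Set (ι → Bool)) : ℝ := cubeExpect p (E.indicator 1)

lemma cubeExpect_prod (g : ι → Bool → ℝ) :
    cubeExpect p (fun ω => ∏ i, g i (ω i)) = ∏ i, ((1 - p i) * g i false + p i * g i true) := by
  simp only [cubeExpect, cubeWeight, ← Finset.prod_mul_distrib]
  rw [← Fintype.prod_sum (fun i b => (if b then p i else 1 - p i) * g i b)]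
  simp [add_comm]

lemma sum_cubeWeight : ∑ ω, cubeWeight p ω = 1 := by
  simpa [cubeExpect] using cubeExpect_prod p (fun _ _ => 1)

lemma cubeProb_univ : cubeProb p Set.univ = 1 := by
  simp [cubeProb, cubeExpect, sum_cubeWeight]

lemma cubeProb_empty : cubeProb p ∅ = 0 := by
  simp [cubeProb, cubeExpect]

lemma cubeProb_coord (x : ι) : cubeProb p {ω | ω x = true} = p x := by
  have h : ({ω | ω x = true} : Set (ι → Bool)).indicator 1 =
      fun ω => ∏ i, if i = x then (if ω i then (1 : ℝ) else 0) else 1 := by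
    ext ω
    cases hω : ω x <;> simp [hω]
  rw [cubeProb, h, cubeExpect_prod p (fun i b => if i = x then (if b then 1 else 0) else 1),
    Fintype.prod_eq_single x (fun i hi => by simp [hi])]
  simp

lemma cubeExpect_add (f g : (ι → Bool) → ℝ) :
    cubeExpect p (f + g) = cubeExpect p f + cubeExpect p g := by
  simp only [cubeExpect, Pi.add_apply, mul_add, Finset.sum_add_distrib]

lemma cubeProb_union_add_inter (E F : Set (ι → Bool)) :
    cubeProb p (E ∪ F) + cubeProb p (E ∩ F) = cubeProb p E + cubeProb p F := by
  simp only [cubeProb, ← cubeExpect_add, Set.indicator_union_add_inter]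

lemma cubeExpect_mul_of_dependsOn {f g : (ι → Bool) → ℝ} {s : Set ι} (hf : DependsOn f s)
    (hg : DependsOn g sᶜ) : cubeExpect p (f * g) = cubeExpect p f * cubeExpect p g := by
  let e := Equiv.piEquivPiSubtypeProd (· ∈ s) (fun _ : ι => Bool)
  let p₁ : s → ℝ := fun i => p i
  let p₂ : {i // i ∉ s} → ℝ := fun i => p i
  have hweight : ∀ a b, cubeWeight p (e.symm (a, b)) = cubeWeight p₁ a * cubeWeight p₂ b := by
    intro a b
    rw [cubeWeight, ← Fintype.prod_subtype_mul_prod_subtype (· ∈ s)]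
    congr 1 <;> refine Finset.prod_congr rfl fun i _ => ?_ <;> simp [e, p₁, p₂, i.2]
  have hfactor : ∀ f g : (ι → Bool) → ℝ, DependsOn f s → DependsOn g sᶜ →
      cubeExpect p (f * g) = cubeExpect p₁ (fun a => f (e.symm (a, default))) *
        cubeExpect p₂ (fun b => g (e.symm (default, b))) := by
    intro f g hf hg
    rw [cubeExpect, ← e.symm.sum_comp, Fintype.sum_prod_type, cubeExpect, cubeExpect,
      Finset.sum_mul_sum]
    refine Finset.sum_congr (by congr!) fun a _ => Finset.sum_congr (by congr!) fun b _ => ?_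
    rw [Pi.mul_apply, hweight, hf (y := e.symm (a, default)) fun i hi => by simp [e, hi],
      hg (y := e.symm (default, b)) fun i (hi : i ∉ s) => by simp [e, hi]]
    ring
  have hconst : DependsOn (1 : (ι → Bool) → ℝ) ∅ := dependsOn_const 1
  have hf1 := hfactor f 1 hf (hconst.mono (Set.empty_subset _))
  have hg1 := hfactor 1 g (hconst.mono (Set.empty_subset _)) hg
  simp only [mul_one, one_mul, Pi.one_apply] at hf1 hg1
  rw [hfactor f g hf hg, hf1, hg1]
  simp [cubeExpect, sum_cubeWeight]

lemma cubeProb_inter_of_dependsOn {E F : Set (ι → Bool)} {s : Set ι}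
    (hE : DependsOn (· ∈ E) s) (hF : DependsOn (· ∈ F) sᶜ) :
    cubeProb p (E ∩ F) = cubeProb p E * cubeProb p F := by
  have hind : ∀ {E : Set (ι → Bool)} {s : Set ι}, DependsOn (· ∈ E) s →
      DependsOn (E.indicator (1 : (ι → Bool) → ℝ)) s := fun hE x y h => by
    simp only [Set.indicator_apply, Pi.one_apply, hE h]
  rw [cubeProb, Set.inter_indicator_one]
  exact cubeExpect_mul_of_dependsOn p (hind hE) (hind hF)

lemma cubeProb_biInter_list {κ : Type*} (l : List κ) (E : κ → Set (ι → Bool)) (S : κ → Set ι)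
    (hE : ∀ k ∈ l, DependsOn (· ∈ E k) (S k)) (hS : l.Pairwise fun j k => Disjoint (S j) (S k)) :
    cubeProb p (⋂ k ∈ l, E k) = (l.map fun k => cubeProb p (E k)).prod := by
  induction l with
  | nil => simp [cubeProb_univ]
  | cons a l ih =>
    rw [List.pairwise_cons] at hS
    have hrest : DependsOn (· ∈ ⋂ k ∈ l, E k) (S a)ᶜ := fun x y h => by
      simp only [Set.mem_iInter₂, eq_iff_iff]
      refine forall₂_congr fun k hk => ?_
      exact (hE k (List.mem_cons_of_mem a hk)
        fun i hi => h i (Set.disjoint_right.1 (hS.1 k hk) hi)).to_iff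
    rw [List.map_cons, List.prod_cons, ← ih (fun k hk => hE k (List.mem_cons_of_mem a hk)) hS.2,
      ← cubeProb_inter_of_dependsOn p (hE a List.mem_cons_self) hrest]
    congr 1
    ext ω
    simp

lemma cubeWeight_inf_mul_sup (a b : ι → Bool) :
    cubeWeight p (a ⊓ b) * cubeWeight p (a ⊔ b) = cubeWeight p a * cubeWeight p b := by
  simp only [cubeWeight, ← Finset.prod_mul_distrib]
  refine Finset.prod_congr rfl fun i _ => ?_
  rw [Pi.inf_apply, Pi.sup_apply]
  cases a i <;> cases b i <;> simp [mul_comm]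

lemma _root_.IsUpperSet.monotone_indicator_one {α : Type*} [Preorder α] {U : Set α}
    (hU : IsUpperSet U) : Monotone (U.indicator (1 : α → ℝ)) := fun a b hab => by
  by_cases ha : a ∈ U
  · simp [ha, hU hab ha]
  · simp [ha, Set.indicator_nonneg]

variable {p} (hp : ∀ i, p i ∈ unitInterval)
include hp

lemma cubeWeight_nonneg (ω : ι → Bool) : 0 ≤ cubeWeight p ω :=
  Finset.prod_nonneg fun i _ => by split_ifs <;> linarith [(hp i).1, (hp i).2]

lemma cubeProb_mono {E F : Set (ι → Bool)} (h : E ⊆ F) : cubeProb p E ≤ cubeProb p F :=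
  Finset.sum_le_sum fun ω _ => mul_le_mul_of_nonneg_left
    (Set.indicator_le_indicator_of_subset h (fun _ => zero_le_one) ω) (cubeWeight_nonneg hp ω)

lemma cubeProb_nonneg (E : Set (ι → Bool)) : 0 ≤ cubeProb p E :=
  Finset.sum_nonneg fun ω _ =>
    mul_nonneg (cubeWeight_nonneg hp ω) (Set.indicator_nonneg (fun _ _ => zero_le_one) ω)

lemma cubeProb_le_one (E : Set (ι → Bool)) : cubeProb p E ≤ 1 := by
  simpa [cubeProb_univ] using cubeProb_mono hp (Set.subset_univ E)

/-- Harris inequality: by `cubeWeight_inf_mul_sup` the product weights satisfy the FKG lattice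
condition. -/
lemma cubeProb_mul_le_inter {U W : Set (ι → Bool)} (hU : IsUpperSet U) (hW : IsUpperSet W) :
    cubeProb p U * cubeProb p W ≤ cubeProb p (U ∩ W) := by
  have := fkg (U.indicator 1) (W.indicator 1) (cubeWeight p) (cubeWeight_nonneg hp)
    (fun _ => Set.indicator_nonneg (fun _ _ => zero_le_one) _)
    (fun _ => Set.indicator_nonneg (fun _ _ => zero_le_one) _)
    hU.monotone_indicator_one hW.monotone_indicator_one
    (fun a b => (cubeWeight_inf_mul_sup p a b).ge)
  rw [sum_cubeWeight, one_mul] at this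
  simpa only [cubeProb, cubeExpect, Set.inter_indicator_one, Pi.mul_apply] using this

lemma cubeProb_biUnion_le {κ : Type*} (s : Finset κ) (U : κ → Set (ι → Bool))
    (hU : ∀ j ∈ s, IsUpperSet (U j)) :
    cubeProb p (⋃ j ∈ s, U j) ≤ 1 - ∏ j ∈ s, (1 - cubeProb p (U j)) := by
  induction s using Finset.induction_on with
  | empty => simp [cubeProb_empty]
  | insert a s ha ih =>
    rw [Finset.set_biUnion_insert, Finset.prod_insert ha]
    have hUa := hU a (Finset.mem_insert_self a s)
    have hW : IsUpperSet (⋃ j ∈ s, U j) :=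
      isUpperSet_iUnion₂ fun j hj => hU j (Finset.mem_insert_of_mem hj)
    have hrest := ih fun j hj => hU j (Finset.mem_insert_of_mem hj)
    have hharris := cubeProb_mul_le_inter hp hUa hW
    have hincl := cubeProb_union_add_inter p (U a) (⋃ j ∈ s, U j)
    have hle : 0 ≤ 1 - cubeProb p (U a) := sub_nonneg.2 (cubeProb_le_one hp (U a))
    nlinarith [mul_le_mul_of_nonneg_left (le_sub_comm.1 hrest) hle]

end BooleanCube

lemma _root_.Multiset.nodup_list_sum {α : Type*} {l : List (Multiset α)} :
    l.sum.Nodup ↔ (∀ s ∈ l, s.Nodup) ∧ l.Pairwise Disjoint := by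
  induction l with
  | nil => simp
  | cons s l ih =>
    simp only [List.sum_cons, Multiset.nodup_add, ih, Multiset.disjoint_list_sum_right,
      List.mem_cons, forall_eq_or_imp, List.pairwise_cons]
    tauto

namespace DB

variable {atoms : A → Finset V}

/-- A possible world of `D` is encoded by its indicator `D.Tuple → Bool`. -/
abbrev Tuple (D : DB atoms dom) : Type _ := Σ i : A, {t // t ∈ D.tuples i}

def tupleProb (D : DB atoms dom) (x : D.Tuple) : ℝ := D.prob x.1 x.2

def InWorld (D : DB atoms dom) (ω : D.Tuple → Bool) (i : A) (t : {x // x ∈ atoms i} → dom) :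
    Prop :=
  ∃ h : t ∈ D.tuples i, ω ⟨i, t, h⟩ = true

variable {D : DB atoms dom}

lemma Valid.tupleProb_mem (hD : D.Valid) (x : D.Tuple) : D.tupleProb x ∈ unitInterval :=
  hD x.1 x.2 x.2.2

lemma InWorld.mono {ω ω' : D.Tuple → Bool} (hle : ω ≤ ω') {i : A}
    {t : {x // x ∈ atoms i} → dom} : D.InWorld ω i t → D.InWorld ω' i t :=
  fun ⟨h, hω⟩ => ⟨h, Bool.le_iff_imp.1 (hle _) hω⟩

lemma inWorld_congr {ω ω' : D.Tuple → Bool} {i : A} {t : {x // x ∈ atoms i} → dom}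
    (h : ∀ x : D.Tuple, x.1 = i → ω x = ω' x) : D.InWorld ω i t ↔ D.InWorld ω' i t :=
  exists_congr fun ht => by rw [h ⟨i, t, ht⟩ rfl]

lemma cubeProb_inWorld [Fintype A] (i : A) (t : {x // x ∈ atoms i} → dom) :
    cubeProb D.tupleProb {ω | D.InWorld ω i t} = if t ∈ D.tuples i then D.prob i t else 0 := by
  split_ifs with ht
  · convert cubeProb_coord D.tupleProb ⟨i, t, ht⟩ using 2
    · exact Set.ext fun ω => ⟨fun ⟨_, h⟩ => h, fun h => ⟨ht, h⟩⟩
    · rfl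
  · convert cubeProb_empty D.tupleProb
    exact Set.eq_empty_of_forall_notMem fun ω ⟨h, _⟩ => ht h

end DB

def queryEvent (atoms : A → Finset V) (D : DB atoms dom) : Set (D.Tuple → Bool) :=
  {ω | ∃ ν : V → dom, ∀ i, D.InWorld ω i (restrict atoms i ν)}

lemma queryProb_eq_cubeProb [Fintype A] (atoms : A → Finset V) (D : DB atoms dom) :
    queryProb atoms D = cubeProb D.tupleProb (queryEvent atoms D) := by
  rw [queryProb, cubeProb, cubeExpect]
  refine Eq.trans (Fintype.sum_equiv (Equiv.piCurry fun i (_ : {t // t ∈ D.tuples i}) => Bool)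
    (fun ω => cubeWeight D.tupleProb ω * (queryEvent atoms D).indicator 1 ω) _ fun ω => ?_).symm
    (Finset.sum_congr (by congr!) fun _ _ => rfl)
  congr 1
  exact Fintype.prod_sigma _

namespace Plan

@[elab_as_elim]
theorem inductionOn {motive : Plan A V → Prop} (P : Plan A V) (atom : ∀ i, motive (atom i))
    (proj : ∀ hv P, motive P → motive (proj hv P))
    (join : ∀ Ps, (∀ Q ∈ Ps, motive Q) → motive (join Ps)) : motive P :=
  match P with
  | .atom i => atom i
  | .proj hv P => proj hv P (inductionOn P atom proj join)
  | .join Ps => join Ps fun Q _ => inductionOn Q atom proj join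
termination_by sizeOf P
decreasing_by
  · simp_wf
  · have := List.sizeOf_lt_of_mem ‹Q ∈ Ps›
    simp_wf
    omega

@[simp] lemma hvar_atom (atoms : A → Finset V) (i : A) :
    (atom i : Plan A V).hvar atoms = atoms i := by
  rw [hvar]

@[simp] lemma hvar_proj (atoms : A → Finset V) (hv : Finset V) (P : Plan A V) :
    (proj hv P).hvar atoms = hv := by
  rw [hvar]

lemma mem_hvar_join {atoms : A → Finset V} {Ps : List (Plan A V)} {v : V} :
    v ∈ (join Ps).hvar atoms ↔ ∃ Q ∈ Ps, v ∈ Q.hvar atoms := by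
  rw [hvar, List.foldr_attach (l := Ps) (f := fun Q acc => Q.hvar atoms ∪ acc) (b := ∅)]
  induction Ps with
  | nil => simp
  | cons Q Ps ih => simp [ih]

@[simp] lemma atomsOf_atom (i : A) : (atom i : Plan A V).atomsOf = {i} := by
  rw [atomsOf]

@[simp] lemma atomsOf_proj (hv : Finset V) (P : Plan A V) : (proj hv P).atomsOf = P.atomsOf := by
  rw [atomsOf]

lemma atomsOf_join (Ps : List (Plan A V)) : (join Ps).atomsOf = (Ps.map atomsOf).sum := by
  rw [atomsOf, List.foldr_attach (l := Ps) (f := fun Q acc => Q.atomsOf + acc) (b := 0)]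
  induction Ps with
  | nil => rfl
  | cons Q Ps ih => simp [ih]

lemma mem_atomsOf_join {Ps : List (Plan A V)} {Q : Plan A V} (hQ : Q ∈ Ps) {i : A}
    (hi : i ∈ Q.atomsOf) : i ∈ (join Ps).atomsOf := by
  rw [atomsOf_join]
  exact Multiset.mem_of_le (List.le_sum_of_mem (List.mem_map_of_mem hQ)) hi

section Score

variable [Fintype V] [Fintype dom]

def projFiber (atoms : A → Finset V) (d₀ : dom) (P : Plan A V) (hv : Finset V) (ν : V → dom) :
    Finset (V → dom) :=
  Finset.univ.filter fun μ => (∀ v, v ∉ P.hvar atoms → μ v = d₀) ∧ ∀ v ∈ hv, μ v = ν v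

variable {atoms : A → Finset V} {D : DB atoms dom}

lemma score_proj (d₀ : dom) (hv : Finset V) (P : Plan A V) (ν : V → dom) :
    (proj hv P).score atoms D d₀ ν =
      1 - ∏ μ ∈ P.projFiber atoms d₀ hv ν, (1 - P.score atoms D d₀ μ) := by
  rw [score, projFiber]

lemma score_join (d₀ : dom) (Ps : List (Plan A V)) (ν : V → dom) :
    (join Ps).score atoms D d₀ ν = (Ps.map fun Q => Q.score atoms D d₀ ν).prod := by
  rw [score, List.attach_map_val (l := Ps) (f := fun Q => Q.score atoms D d₀ ν)]

lemma score_mem_unitInterval (hD : D.Valid) (d₀ : dom) (P : Plan A V) (ν : V → dom) :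
    P.score atoms D d₀ ν ∈ unitInterval := by
  induction P using inductionOn generalizing ν with
  | atom i =>
    rw [score]
    split_ifs with h
    exacts [hD i _ h, unitInterval.zero_mem]
  | proj hv P ih =>
    rw [score_proj]
    exact Set.Icc.mem_iff_one_sub_mem.1 <|
      unitInterval.prod_mem fun μ _ => Set.Icc.mem_iff_one_sub_mem.1 (ih μ)
  | join Ps ih =>
    rw [score_join]
    refine list_prod_mem (S := unitInterval.submonoid) fun r hr => ?_
    obtain ⟨Q, hQ, rfl⟩ := List.mem_map.1 hr
    exact ih Q hQ ν

end Score

def outputEvent (atoms : A → Finset V) (D : DB atoms dom) (P : Plan A V) (ν : V → dom) :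
    Set (D.Tuple → Bool) :=
  {ω | ∃ μ : V → dom, (∀ v ∈ P.hvar atoms, μ v = ν v) ∧
    ∀ i ∈ P.atomsOf, D.InWorld ω i (restrict atoms i μ)}

section OutputEvent

variable {atoms : A → Finset V} {D : DB atoms dom}

lemma isUpperSet_outputEvent (P : Plan A V) (ν : V → dom) :
    IsUpperSet (P.outputEvent atoms D ν) :=
  fun _ _ hle ⟨μ, hμ, hsat⟩ => ⟨μ, hμ, fun i hi => (hsat i hi).mono hle⟩

lemma dependsOn_outputEvent (P : Plan A V) (ν : V → dom) :
    DependsOn (· ∈ P.outputEvent atoms D ν) {x : D.Tuple | x.1 ∈ P.atomsOf} := fun ω ω' h => by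
  simp only [outputEvent, Set.mem_ofPred_eq, eq_iff_iff]
  exact exists_congr fun μ => and_congr_right fun _ => forall₂_congr fun i hi =>
    DB.inWorld_congr fun x hx => h x (show x.1 ∈ P.atomsOf from hx ▸ hi)

lemma outputEvent_atom (i : A) (ν : V → dom) :
    (atom i).outputEvent atoms D ν = {ω | D.InWorld ω i (restrict atoms i ν)} := by
  ext ω
  simp only [outputEvent, hvar_atom, atomsOf_atom, Multiset.mem_singleton, forall_eq,
    Set.mem_ofPred_eq]
  refine ⟨fun ⟨μ, hμ, h⟩ => ?_, fun h => ⟨ν, fun _ _ => rfl, h⟩⟩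
  rwa [show restrict atoms i μ = restrict atoms i ν from funext fun x => hμ x x.2] at h

lemma outputEvent_proj_subset [Fintype V] [Fintype dom] (d₀ : dom) {hv : Finset V}
    {P : Plan A V} (hsub : hv ⊆ P.hvar atoms) (ν : V → dom) :
    (proj hv P).outputEvent atoms D ν ⊆
      ⋃ μ ∈ P.projFiber atoms d₀ hv ν, P.outputEvent atoms D μ := by
  rintro ω ⟨μ, hμ, hsat⟩
  rw [hvar_proj] at hμ
  rw [atomsOf_proj] at hsat
  simp only [Set.mem_iUnion₂]
  refine ⟨fun v => if v ∈ P.hvar atoms then μ v else d₀, ?_, μ, fun v hv => (if_pos hv).symm, hsat⟩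
  exact Finset.mem_filter.2 ⟨Finset.mem_univ _, fun v hv => if_neg hv,
    fun v hv => (if_pos (hsub hv)).trans (hμ v hv)⟩

lemma outputEvent_join_subset (Ps : List (Plan A V)) (ν : V → dom) :
    (join Ps).outputEvent atoms D ν ⊆ ⋂ Q ∈ Ps, Q.outputEvent atoms D ν := by
  rintro ω ⟨μ, hμ, hsat⟩
  simp only [Set.mem_iInter₂]
  exact fun Q hQ => ⟨μ, fun v hv => hμ v (mem_hvar_join.2 ⟨Q, hQ, hv⟩),
    fun i hi => hsat i (mem_atomsOf_join hQ hi)⟩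

lemma outputEvent_eq_queryEvent [Fintype A] {P : Plan A V} (hP : P.IsPlanFor atoms ∅)
    (ν : V → dom) : P.outputEvent atoms D ν = queryEvent atoms D := by
  obtain ⟨-, hatoms, hhvar⟩ := hP
  ext ω
  simp [outputEvent, queryEvent, hatoms, hhvar]

theorem cubeProb_outputEvent_le_score [Fintype A] [Fintype V] [Fintype dom] (hD : D.Valid)
    (d₀ : dom) (P : Plan A V) (hWF : P.WF atoms) (hnd : P.atomsOf.Nodup) (ν : V → dom) :
    cubeProb D.tupleProb (P.outputEvent atoms D ν) ≤ P.score atoms D d₀ ν := by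
  have hp := hD.tupleProb_mem
  induction P using inductionOn generalizing ν with
  | atom i =>
    rw [outputEvent_atom, DB.cubeProb_inWorld, score]
  | proj hv P ih =>
    rw [WF] at hWF
    rw [atomsOf_proj] at hnd
    calc cubeProb D.tupleProb ((proj hv P).outputEvent atoms D ν)
        ≤ cubeProb D.tupleProb (⋃ μ ∈ P.projFiber atoms d₀ hv ν, P.outputEvent atoms D μ) :=
          cubeProb_mono hp (outputEvent_proj_subset d₀ hWF.1 ν)
      _ ≤ 1 - ∏ μ ∈ P.projFiber atoms d₀ hv ν,
            (1 - cubeProb D.tupleProb (P.outputEvent atoms D μ)) :=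
          cubeProb_biUnion_le hp _ _ fun μ _ => isUpperSet_outputEvent P μ
      _ ≤ 1 - ∏ μ ∈ P.projFiber atoms d₀ hv ν, (1 - P.score atoms D d₀ μ) :=
          sub_le_sub_left (Finset.prod_le_prod
            (fun μ _ => sub_nonneg.2 (score_mem_unitInterval hD d₀ P μ).2)
            fun μ _ => sub_le_sub_left (ih hWF.2.2 hnd μ) 1) 1
      _ = (proj hv P).score atoms D d₀ ν := (score_proj d₀ hv P ν).symm
  | join Ps ih =>
    rw [WF] at hWF
    rw [atomsOf_join, Multiset.nodup_list_sum, List.pairwise_map] at hnd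
    calc cubeProb D.tupleProb ((join Ps).outputEvent atoms D ν)
        ≤ cubeProb D.tupleProb (⋂ Q ∈ Ps, Q.outputEvent atoms D ν) :=
          cubeProb_mono hp (outputEvent_join_subset Ps ν)
      _ = (Ps.map fun Q => cubeProb D.tupleProb (Q.outputEvent atoms D ν)).prod :=
          cubeProb_biInter_list _ Ps _ (fun Q => {x | x.1 ∈ Q.atomsOf})
            (fun Q _ => dependsOn_outputEvent Q ν)
            (hnd.2.imp fun hdisj => Set.disjoint_left.2 fun _ hx hx' =>
              Multiset.disjoint_left.1 hdisj hx hx')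
      _ ≤ (Ps.map fun Q => Q.score atoms D d₀ ν).prod :=
          List.prod_map_le_prod_map₀ _ _ (fun Q _ => cubeProb_nonneg hp _) fun Q hQ =>
            ih Q hQ (hWF.2 Q hQ).2 (hnd.1 _ (List.mem_map_of_mem hQ)) ν
      _ = (join Ps).score atoms D d₀ ν := (score_join d₀ Ps ν).symm

end OutputEvent

end Plan

/-- Every plan computes an upper bound.  Let `P` be any query plan for a
Boolean self-join-free conjunctive query `q`.  Then for every tuple-independent
probabilistic database `D`, `P(q) ≤ score(P)`. -/
theorem plan_score_upper_bound
    {A V dom : Type*} [Fintype A] [Fintype V] [Fintype dom] [Inhabited dom]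
    (atoms : A → Finset V) (D : DB atoms dom) (hD : D.Valid)
    (P : Plan A V) (hP : Plan.IsPlanFor atoms ∅ P) :
    queryProb atoms D ≤ Plan.bscore atoms D P := by
  rw [queryProb_eq_cubeProb, ← Plan.outputEvent_eq_queryEvent hP default]
  exact P.cubeProb_outputEvent_le_score hD default hP.1 (hP.2.1 ▸ Finset.univ.nodup) _

end

end PDB
end

section
/- Let q be a Boolean self-join-free conjunctive query and D a tuple-independent probabilistic database on which q has nonempty lineage and all tuple probabilities are strictly positive. For f ∈ (0,1], let D_f denote D with every tuple probability multiplied by f, and let P_f(q) and ρ_f(q) denote the query probability and the propagation score on D_f. Then the relative error tends to zero as f tends to zero: lim_{f→0⁺} (ρ_f(q) − P_f(q)) / P_f(q) = 0. -/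
open scoped Classical

namespace PDB

noncomputable section

variable {A V dom : Type*}

/-! ### Auxiliary development for Statement 14 -/

section Small

open Filter Finset

variable {A V dom : Type*} [Fintype A] [Fintype V] [Fintype dom]

/-- canonical representatives of satisfying valuations -/
def Rset (atoms : A → Finset V) (D : DB atoms dom) :
    Finset (∀ i : A, {x // x ∈ atoms i} → dom) :=
  ((Finset.univ : Finset (V → dom)).filter
      (fun ν => ∀ i : A, restrict atoms i ν ∈ D.tuples i)).image
    (fun ν i => restrict atoms i ν)

lemma mem_tuples_of_mem_Rset {atoms : A → Finset V} {D : DB atoms dom}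
    {r : ∀ i : A, {x // x ∈ atoms i} → dom} (hr : r ∈ Rset atoms D) (i : A) :
    r i ∈ D.tuples i := by
  rcases Finset.mem_image.1 hr with ⟨ν, hν, rfl⟩
  exact (Finset.mem_filter.1 hν).2 i

variable {atoms : A → Finset V}

/-- number of true tuples of a world -/
def kOf (D : DB atoms dom) (W : ∀ i : A, {t // t ∈ D.tuples i} → Bool) : ℕ :=
  ∑ i : A, (Finset.univ.filter (fun t => W i t = true)).card

/-- product of the probabilities of the true tuples -/
def COf (D : DB atoms dom) (W : ∀ i : A, {t // t ∈ D.tuples i} → Bool) : ℝ :=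
  ∏ i : A, ∏ t ∈ Finset.univ.filter (fun t => W i t = true), D.prob i t.1

/-- remainder factor -/
def ROf (D : DB atoms dom) (f : ℝ) (W : ∀ i : A, {t // t ∈ D.tuples i} → Bool) : ℝ :=
  ∏ i : A, ∏ t ∈ Finset.univ.filter (fun t => ¬ W i t = true), (1 - f * D.prob i t.1)

/-- the world satisfies the query -/
def IndOf (D : DB atoms dom) (W : ∀ i : A, {t // t ∈ D.tuples i} → Bool) : Prop :=
  ∃ ν : V → dom, ∀ i : A,
    ∃ h : restrict atoms i ν ∈ D.tuples i, W i ⟨restrict atoms i ν, h⟩ = true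

lemma prod_ite_eq_kCR (D : DB atoms dom) (f : ℝ)
    (W : ∀ i : A, {t // t ∈ D.tuples i} → Bool) :
    (∏ i : A, ∏ t : {t // t ∈ D.tuples i},
        if W i t = true then f * D.prob i t.1 else 1 - f * D.prob i t.1)
      = f ^ kOf D W * COf D W * ROf D f W := by
  classical
  have h1 : ∀ i : A,
      (∏ t : {t // t ∈ D.tuples i},
        if W i t = true then f * D.prob i t.1 else 1 - f * D.prob i t.1)
      = f ^ (Finset.univ.filter (fun t : {t // t ∈ D.tuples i} => W i t = true)).card *
          (∏ t ∈ Finset.univ.filter (fun t : {t // t ∈ D.tuples i} => W i t = true),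
            D.prob i t.1) *
          ∏ t ∈ Finset.univ.filter (fun t : {t // t ∈ D.tuples i} => ¬ W i t = true),
            (1 - f * D.prob i t.1) := by
    intro i
    rw [Finset.prod_ite, Finset.prod_mul_distrib, Finset.prod_const]
  calc (∏ i : A, ∏ t : {t // t ∈ D.tuples i},
        if W i t = true then f * D.prob i t.1 else 1 - f * D.prob i t.1)
      = ∏ i : A,
          (f ^ (Finset.univ.filter (fun t : {t // t ∈ D.tuples i} => W i t = true)).card *
          (∏ t ∈ Finset.univ.filter (fun t : {t // t ∈ D.tuples i} => W i t = true),
            D.prob i t.1) *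
          ∏ t ∈ Finset.univ.filter (fun t : {t // t ∈ D.tuples i} => ¬ W i t = true),
            (1 - f * D.prob i t.1)) := Finset.prod_congr rfl (fun i _ => h1 i)
    _ = f ^ kOf D W * COf D W * ROf D f W := by
        rw [Finset.prod_mul_distrib, Finset.prod_mul_distrib,
          Finset.prod_pow_eq_pow_sum]
        rfl

lemma queryProb_scale_eq (D : DB atoms dom) (f : ℝ) :
    queryProb atoms (scaleDB D f) =
      ∑ W : ∀ i : A, {t // t ∈ D.tuples i} → Bool,
        f ^ kOf D W * COf D W * ROf D f W * (if IndOf D W then 1 else 0) := by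
  classical
  show (∑ W : ∀ i : A, {t // t ∈ D.tuples i} → Bool,
      (∏ i : A, ∏ t : {t // t ∈ D.tuples i},
        if W i t = true then f * D.prob i t.1 else 1 - f * D.prob i t.1) *
      (if IndOf D W then 1 else 0)) = _
  exact Finset.sum_congr rfl (fun W _ => by rw [prod_ite_eq_kCR])

lemma card_le_kOf (D : DB atoms dom) {W : ∀ i : A, {t // t ∈ D.tuples i} → Bool}
    (hW : IndOf D W) : Fintype.card A ≤ kOf D W := by
  classical
  obtain ⟨ν, hν⟩ := hW
  have h1 : ∀ i : A,
      1 ≤ (Finset.univ.filter (fun t : {t // t ∈ D.tuples i} => W i t = true)).card := by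
    intro i
    obtain ⟨h, hw⟩ := hν i
    exact Finset.card_pos.2 ⟨⟨restrict atoms i ν, h⟩,
      Finset.mem_filter.2 ⟨Finset.mem_univ _, hw⟩⟩
  calc Fintype.card A = ∑ _i : A, 1 := by simp
    _ ≤ kOf D W := Finset.sum_le_sum (fun i _ => h1 i)

lemma tendsto_term (D : DB atoms dom) (W : ∀ i : A, {t // t ∈ D.tuples i} → Bool) :
    Tendsto (fun f : ℝ =>
        f ^ kOf D W * COf D W * ROf D f W * (if IndOf D W then 1 else 0) /
          f ^ (Fintype.card A))
      (nhdsWithin 0 (Set.Ioi 0))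
      (nhds (if IndOf D W ∧ kOf D W = Fintype.card A then COf D W else 0)) := by
  classical
  have hRcont : Continuous (fun f : ℝ => ROf D f W) := by
    unfold ROf
    apply continuous_finset_prod
    intro i _
    apply continuous_finset_prod
    intro t _
    exact continuous_const.sub (continuous_id.mul continuous_const)
  have hR0 : ROf D 0 W = 1 := by simp [ROf]
  by_cases hInd : IndOf D W
  · have hCR : Tendsto (fun f : ℝ => COf D W * ROf D f W)
        (nhdsWithin 0 (Set.Ioi 0)) (nhds (COf D W)) := by
      have hc2 : Continuous (fun f : ℝ => COf D W * ROf D f W) :=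
        continuous_const.mul hRcont
      have h := (hc2.tendsto 0).mono_left (nhdsWithin_le_nhds (s := Set.Ioi (0:ℝ)))
      simpa [hR0] using h
    by_cases hk : kOf D W = Fintype.card A
    · have heq : ∀ f ∈ Set.Ioi (0:ℝ),
          COf D W * ROf D f W =
            f ^ kOf D W * COf D W * ROf D f W * (if IndOf D W then 1 else 0) /
              f ^ (Fintype.card A) := by
        intro f hf
        have hfne : (f : ℝ) ^ Fintype.card A ≠ 0 :=
          pow_ne_zero _ (ne_of_gt (Set.mem_Ioi.1 hf))
        rw [if_pos hInd, hk]
        field_simp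
      have hgoal := hCR.congr' (eventually_nhdsWithin_of_forall heq)
      simpa [hInd, hk] using hgoal
    · have hlt : Fintype.card A < kOf D W :=
        lt_of_le_of_ne (card_le_kOf D hInd) (Ne.symm hk)
      have hm : 1 ≤ kOf D W - Fintype.card A := by omega
      have t1 : Tendsto (fun f : ℝ => f ^ (kOf D W - Fintype.card A))
          (nhdsWithin 0 (Set.Ioi 0)) (nhds 0) := by
        have h := ((continuous_pow (kOf D W - Fintype.card A)).tendsto 0).mono_left
          (nhdsWithin_le_nhds (s := Set.Ioi (0:ℝ)))
        simpa [zero_pow (by omega : kOf D W - Fintype.card A ≠ 0)] using h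
      have heq : ∀ f ∈ Set.Ioi (0:ℝ),
          f ^ (kOf D W - Fintype.card A) * (COf D W * ROf D f W) =
            f ^ kOf D W * COf D W * ROf D f W * (if IndOf D W then 1 else 0) /
              f ^ (Fintype.card A) := by
        intro f hf
        have hfne : (f : ℝ) ^ Fintype.card A ≠ 0 :=
          pow_ne_zero _ (ne_of_gt (Set.mem_Ioi.1 hf))
        have hpow : f ^ kOf D W =
            f ^ (Fintype.card A) * f ^ (kOf D W - Fintype.card A) := by
          rw [← pow_add]
          congr 1
          omega
        rw [if_pos hInd, hpow]
        field_simp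
      have hgoal := (t1.mul hCR).congr' (eventually_nhdsWithin_of_forall heq)
      simpa [hInd, hk] using hgoal
  · have : (fun f : ℝ =>
        f ^ kOf D W * COf D W * ROf D f W * (if IndOf D W then 1 else 0) /
          f ^ (Fintype.card A)) = fun _ => (0:ℝ) := by
      funext f
      rw [if_neg hInd]
      simp
    rw [this, if_neg (by tauto)]
    exact tendsto_const_nhds

/-- the world selecting exactly the tuples of a satisfying assignment -/
def WofR (D : DB atoms dom) (r : ∀ i : A, {x // x ∈ atoms i} → dom) :
    ∀ i : A, {t // t ∈ D.tuples i} → Bool :=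
  fun i t => if t.1 = r i then true else false

lemma WofR_true_iff (D : DB atoms dom) (r : ∀ i : A, {x // x ∈ atoms i} → dom)
    (i : A) (t : {t // t ∈ D.tuples i}) :
    WofR D r i t = true ↔ t.1 = r i := by
  unfold WofR
  by_cases h : t.1 = r i <;> simp [h]

lemma filter_WofR (D : DB atoms dom) {r : ∀ i : A, {x // x ∈ atoms i} → dom}
    (h : ∀ i, r i ∈ D.tuples i) (i : A) :
    Finset.univ.filter (fun t : {t // t ∈ D.tuples i} => WofR D r i t = true)
      = {⟨r i, h i⟩} := by
  classical
  ext t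
  simp only [Finset.mem_filter, Finset.mem_univ, true_and, Finset.mem_singleton,
    WofR_true_iff]
  constructor
  · intro ht; exact Subtype.ext ht
  · intro ht; rw [ht]

lemma sum_min_eq (D : DB atoms dom) :
    (∑ W : ∀ i : A, {t // t ∈ D.tuples i} → Bool,
        if IndOf D W ∧ kOf D W = Fintype.card A then COf D W else 0)
      = ∑ r ∈ Rset atoms D, ∏ i, D.prob i (r i) := by
  classical
  rw [← Finset.sum_filter]
  have hset : (Finset.univ.filter
        (fun W : ∀ i : A, {t // t ∈ D.tuples i} → Bool =>
          IndOf D W ∧ kOf D W = Fintype.card A))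
      = (Rset atoms D).image (WofR D) := by
    ext W
    simp only [Finset.mem_filter, Finset.mem_univ, true_and, Finset.mem_image]
    constructor
    · rintro ⟨hInd, hk⟩
      obtain ⟨ν, hν⟩ := hInd
      have hsat : ∀ i, restrict atoms i ν ∈ D.tuples i := fun i => (hν i).elim (fun h _ => h)
      have h1 : ∀ i : A,
          1 ≤ (Finset.univ.filter
            (fun t : {t // t ∈ D.tuples i} => W i t = true)).card := by
        intro i
        obtain ⟨h, hw⟩ := hν i
        exact Finset.card_pos.2 ⟨⟨restrict atoms i ν, h⟩,
          Finset.mem_filter.2 ⟨Finset.mem_univ _, hw⟩⟩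
      have hcards : ∀ i : A,
          (Finset.univ.filter
            (fun t : {t // t ∈ D.tuples i} => W i t = true)).card = 1 := by
        have hsum : (∑ _i : A, 1) = kOf D W := by
          rw [hk]; simp
        have := (Finset.sum_eq_sum_iff_of_le (fun i _ => h1 i)).1 hsum
        intro i
        exact ((this i (Finset.mem_univ i))).symm
      refine ⟨fun i => restrict atoms i ν, ?_, ?_⟩
      · exact Finset.mem_image.2 ⟨ν, Finset.mem_filter.2 ⟨Finset.mem_univ _, hsat⟩, rfl⟩
      · funext i t
        have hmem0 : (⟨restrict atoms i ν, hsat i⟩ : {t // t ∈ D.tuples i}) ∈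
            Finset.univ.filter (fun t : {t // t ∈ D.tuples i} => W i t = true) := by
          obtain ⟨h, hw⟩ := hν i
          exact Finset.mem_filter.2 ⟨Finset.mem_univ _, hw⟩
        obtain ⟨t0, ht0⟩ := Finset.card_eq_one.1 (hcards i)
        have ht0' : t0 = ⟨restrict atoms i ν, hsat i⟩ := by
          have := hmem0
          rw [ht0, Finset.mem_singleton] at this
          exact this.symm
        by_cases ht : (t : {x // x ∈ atoms i} → dom) = restrict atoms i ν
        · have : t = (⟨restrict atoms i ν, hsat i⟩ : {t // t ∈ D.tuples i}) :=
            Subtype.ext ht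
          rw [this]
          have hW : W i (⟨restrict atoms i ν, hsat i⟩ : {t // t ∈ D.tuples i}) = true := by
            have := Finset.mem_filter.1 hmem0
            exact this.2
          rw [hW, (WofR_true_iff D _ i _).2 rfl]
        · have hW : ¬ (W i t = true) := by
            intro hWt
            have : t ∈ Finset.univ.filter
                (fun t : {t // t ∈ D.tuples i} => W i t = true) :=
              Finset.mem_filter.2 ⟨Finset.mem_univ _, hWt⟩
            rw [ht0, Finset.mem_singleton, ht0'] at this
            exact ht (congrArg Subtype.val this)
          have hW' : ¬ (WofR D (fun i => restrict atoms i ν) i t = true) := by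
            rw [WofR_true_iff]
            exact ht
          rw [Bool.not_eq_true] at hW hW'
          rw [hW, hW']
    · rintro ⟨r, hr, rfl⟩
      have hmem : ∀ i, r i ∈ D.tuples i := mem_tuples_of_mem_Rset hr
      obtain ⟨ν, hν, hrν⟩ := Finset.mem_image.1 hr
      have hsat := (Finset.mem_filter.1 hν).2
      constructor
      · refine ⟨ν, fun i => ⟨hsat i, ?_⟩⟩
        rw [WofR_true_iff]
        exact congrFun hrν i
      · unfold kOf
        calc (∑ i : A, (Finset.univ.filter
              (fun t : {t // t ∈ D.tuples i} => WofR D r i t = true)).card)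
            = ∑ _i : A, 1 := Finset.sum_congr rfl
              (fun i _ => by rw [filter_WofR D hmem i, Finset.card_singleton])
          _ = Fintype.card A := by simp
  rw [hset, Finset.sum_image ?hinj]
  case hinj =>
    intro r hr r' hr' hWeq
    funext i
    have hmem : r i ∈ D.tuples i := mem_tuples_of_mem_Rset hr i
    have h1 : WofR D r i ⟨r i, hmem⟩ = true := (WofR_true_iff D r i _).2 rfl
    rw [hWeq] at h1
    simpa using (WofR_true_iff D r' i ⟨r i, hmem⟩).1 h1
  apply Finset.sum_congr rfl
  intro r hr
  have hmem : ∀ i, r i ∈ D.tuples i := mem_tuples_of_mem_Rset hr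
  unfold COf
  apply Finset.prod_congr rfl
  intro i _
  rw [filter_WofR D hmem i, Finset.prod_singleton]

/-- Key asymptotics: `P_f(q) / f^{|A|}` tends to the sum of the weights of the
satisfying assignments. -/
lemma tendsto_queryProb_div (atoms : A → Finset V) (D : DB atoms dom) :
    Tendsto
      (fun f : ℝ => queryProb atoms (scaleDB D f) / f ^ (Fintype.card A))
      (nhdsWithin 0 (Set.Ioi 0))
      (nhds (∑ r ∈ Rset atoms D, ∏ i, D.prob i (r i))) := by
  classical
  have hfun : (fun f : ℝ => queryProb atoms (scaleDB D f) / f ^ (Fintype.card A))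
      = fun f : ℝ => ∑ W : ∀ i : A, {t // t ∈ D.tuples i} → Bool,
          f ^ kOf D W * COf D W * ROf D f W * (if IndOf D W then 1 else 0) /
            f ^ (Fintype.card A) := by
    funext f
    rw [queryProb_scale_eq, Finset.sum_div]
  rw [hfun, ← sum_min_eq D]
  exact tendsto_finset_sum _ (fun W _ => tendsto_term D W)

end Small

section Small2

open Filter Finset

variable {A V dom : Type*} [Fintype A] [Fintype V] [Fintype dom]

lemma dissDB_scale (atoms Δ : A → Finset V) (D : DB atoms dom) (f : ℝ) :
    dissDB atoms Δ (scaleDB D f) = scaleDB (dissDB atoms Δ D) f := rfl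

lemma Rset_diss_sum (atoms : A → Finset V) (Δ : A → Finset V) (hΔ : IsDiss atoms ∅ Δ)
    (D : DB atoms dom) :
    (∑ r ∈ Rset (dissAtoms atoms Δ) (dissDB atoms Δ D),
        ∏ i, (dissDB atoms Δ D).prob i (r i))
      = ∑ r ∈ Rset atoms D, ∏ i, D.prob i (r i) := by
  classical
  have hfilt : ((Finset.univ : Finset (V → dom)).filter
        (fun ν => ∀ i : A, restrict (dissAtoms atoms Δ) i ν ∈ (dissDB atoms Δ D).tuples i))
      = ((Finset.univ : Finset (V → dom)).filter
        (fun ν => ∀ i : A, restrict atoms i ν ∈ D.tuples i)) := by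
    apply Finset.filter_congr
    intro ν _
    simp only [dissDB, Finset.mem_filter, Finset.mem_univ, true_and]
    constructor
    · intro h i; exact h i
    · intro h i; exact h i
  set φ : (∀ i : A, {x // x ∈ dissAtoms atoms Δ i} → dom) →
      (∀ i : A, {x // x ∈ atoms i} → dom) :=
    fun r i => restrictTup (show atoms i ⊆ dissAtoms atoms Δ i from
      Finset.subset_union_left) (r i) with hφ
  have hinj : ∀ r ∈ Rset (dissAtoms atoms Δ) (dissDB atoms Δ D),
      ∀ r' ∈ Rset (dissAtoms atoms Δ) (dissDB atoms Δ D), φ r = φ r' → r = r' := by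
    intro r hr r' hr' hφeq
    rcases Finset.mem_image.1 hr with ⟨ν, hν, rfl⟩
    rcases Finset.mem_image.1 hr' with ⟨μ, hμ, rfl⟩
    have hagree : ∀ j : A, ∀ x : V, ∀ hx : x ∈ atoms j, ν x = μ x := by
      intro j x hx
      have := congrFun (congrFun hφeq j) ⟨x, hx⟩
      exact this
    funext i x
    rcases Finset.mem_union.1 x.2 with hx | hx
    · exact hagree i x.1 hx
    · have hx' := hΔ i hx
      have hxv : x.1 ∈ varsOf atoms := (Finset.mem_sdiff.1 (Finset.mem_sdiff.1 hx').1).1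
      obtain ⟨j, _, hj⟩ := Finset.mem_sup.1 hxv
      exact hagree j x.1 hj
  have himg : (Rset (dissAtoms atoms Δ) (dissDB atoms Δ D)).image φ = Rset atoms D := by
    unfold Rset
    rw [hfilt, Finset.image_image]
    rfl
  calc (∑ r ∈ Rset (dissAtoms atoms Δ) (dissDB atoms Δ D),
        ∏ i, (dissDB atoms Δ D).prob i (r i))
      = ∑ r ∈ Rset (dissAtoms atoms Δ) (dissDB atoms Δ D), ∏ i, D.prob i (φ r i) :=
        Finset.sum_congr rfl (fun r _ => Finset.prod_congr rfl (fun i _ => rfl))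
    _ = ∑ r' ∈ (Rset (dissAtoms atoms Δ) (dissDB atoms Δ D)).image φ,
          ∏ i, D.prob i (r' i) := by rw [Finset.sum_image hinj]
    _ = ∑ r ∈ Rset atoms D, ∏ i, D.prob i (r i) := by rw [himg]

/-- the full dissociation is safe -/
lemma safe_full_diss (atoms : A → Finset V) :
    SafeDiss atoms ∅ (fun i => (varsOf atoms \ ∅) \ atoms i) := by
  classical
  have hsub : ∀ i : A, atoms i ⊆ varsOf atoms :=
    fun i x hx => Finset.mem_sup.2 ⟨i, Finset.mem_univ i, hx⟩
  constructor
  · intro i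
    exact subset_rfl
  · have key : ∀ z : V,
        atOf (dissAtoms atoms (fun i => (varsOf atoms \ ∅) \ atoms i)) Finset.univ z
          = if z ∈ varsOf atoms then Finset.univ else ∅ := by
      intro z
      split_ifs with hz
      · ext i
        simp only [atOf, Finset.mem_filter, Finset.mem_univ, true_and, dissAtoms,
          Finset.mem_union, Finset.mem_sdiff, Finset.notMem_empty, iff_true]
        by_cases h : z ∈ atoms i
        · exact Or.inl h
        · exact Or.inr ⟨⟨hz, fun hf => hf⟩, h⟩
      · ext i
        simp only [atOf, Finset.mem_filter, Finset.mem_univ, true_and, dissAtoms,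
          Finset.mem_union, Finset.mem_sdiff, Finset.notMem_empty, iff_false]
        rintro (h | ⟨⟨h, _⟩, _⟩)
        · exact hz (hsub i h)
        · exact hz h
    intro x _ y _
    by_cases hx : x ∈ varsOf atoms
    · by_cases hy : y ∈ varsOf atoms
      · left
        rw [key x, key y, if_pos hx, if_pos hy]
      · right; left
        rw [key y, if_neg hy, Finset.inter_empty]
    · left
      rw [key x, if_neg hx]
      exact Finset.empty_subset _

lemma propScore_attained (atoms : A → Finset V) (D' : DB atoms dom) :
    ∃ Δ : A → Finset V, SafeDiss atoms ∅ Δ ∧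
      propScore atoms D' = dissProb atoms Δ D' := by
  classical
  set Fs := (Finset.univ : Finset (A → Finset V)).filter
    (fun Δ => SafeDiss atoms ∅ Δ) with hFs
  have hne : (Fs.image (fun Δ => dissProb atoms Δ D')).Nonempty :=
    ⟨_, Finset.mem_image_of_mem _
      (Finset.mem_filter.2 ⟨Finset.mem_univ _, safe_full_diss atoms⟩)⟩
  have hset : {r : ℝ | ∃ Δ : A → Finset V, SafeDiss atoms ∅ Δ ∧ r = dissProb atoms Δ D'}
      = ↑(Fs.image (fun Δ => dissProb atoms Δ D')) := by
    ext r
    simp only [Set.mem_setOf_eq, Finset.coe_image, Set.mem_image, Finset.mem_coe, hFs,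
      Finset.mem_filter, Finset.mem_univ, true_and]
    constructor
    · rintro ⟨Δ, hΔ, rfl⟩; exact ⟨Δ, hΔ, rfl⟩
    · rintro ⟨Δ, hΔ, rfl⟩; exact ⟨Δ, hΔ, rfl⟩
  have hmem := hne.csInf_mem
  rw [propScore, hset]
  obtain ⟨Δ, hΔ, hval⟩ := Finset.mem_image.1 hmem
  exact ⟨Δ, (Finset.mem_filter.1 hΔ).2, hval.symm⟩

end Small2

/-- Small probabilities.  Let `q` be a Boolean self-join-free
conjunctive query on a tuple-independent probabilistic database `D` with nonempty lineage
and strictly positive tuple probabilities.  Scaling all tuple probabilities by `f`, the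
relative error of the approximation of `P(q)` by the propagation score `ρ(q)` tends to `0`
as `f → 0⁺`. -/
theorem propagation_score_relative_error_tendsto_zero
    {A V dom : Type*} [Fintype A] [Fintype V] [Fintype dom]
    (atoms : A → Finset V) (D : DB atoms dom)
    (hpos : ∀ i : A, ∀ t ∈ D.tuples i, 0 < D.prob i t ∧ D.prob i t ≤ 1)
    (hlin : ∃ ν : V → dom, ∀ i : A, restrict atoms i ν ∈ D.tuples i) :
    Filter.Tendsto
      (fun f : ℝ =>
        (propScore atoms (scaleDB D f) - queryProb atoms (scaleDB D f)) /
          queryProb atoms (scaleDB D f))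
      (nhdsWithin 0 (Set.Ioi 0)) (nhds 0) := by
  classical
  open Filter in
  have hcpos : 0 < ∑ r ∈ Rset atoms D, ∏ i, D.prob i (r i) := by
    apply Finset.sum_pos
    · intro r hr
      exact Finset.prod_pos fun i _ => (hpos i _ (mem_tuples_of_mem_Rset hr i)).1
    · obtain ⟨ν, hν⟩ := hlin
      exact ⟨_, Finset.mem_image_of_mem _
        (Finset.mem_filter.2 ⟨Finset.mem_univ _, hν⟩)⟩
  set n := Fintype.card A with hn
  set c := ∑ r ∈ Rset atoms D, ∏ i, D.prob i (r i) with hc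
  have Tg : Filter.Tendsto (fun f : ℝ => queryProb atoms (scaleDB D f) / f ^ n)
      (nhdsWithin 0 (Set.Ioi 0)) (nhds c) := tendsto_queryProb_div atoms D
  set Fs := (Finset.univ : Finset (A → Finset V)).filter
    (fun Δ => SafeDiss atoms ∅ Δ) with hFs
  have TΔ : ∀ Δ ∈ Fs, Filter.Tendsto
      (fun f : ℝ => dissProb atoms Δ (scaleDB D f) / f ^ n)
      (nhdsWithin 0 (Set.Ioi 0)) (nhds c) := by
    intro Δ hΔ
    have hsafe := (Finset.mem_filter.1 hΔ).2
    have h2 := tendsto_queryProb_div (dissAtoms atoms Δ) (dissDB atoms Δ D)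
    rw [Rset_diss_sum atoms Δ hsafe.1 D] at h2
    have heq : (fun f : ℝ => dissProb atoms Δ (scaleDB D f) / f ^ n)
        = fun f : ℝ =>
          queryProb (dissAtoms atoms Δ) (scaleDB (dissDB atoms Δ D) f) /
            f ^ (Fintype.card A) := by
      funext f
      rw [hn, dissProb, dissDB_scale]
    rw [heq, hc]
    exact h2
  have Tρ : Filter.Tendsto (fun f : ℝ => propScore atoms (scaleDB D f) / f ^ n)
      (nhdsWithin 0 (Set.Ioi 0)) (nhds c) := by
    rw [← tendsto_sub_nhds_zero_iff]
    apply squeeze_zero_norm'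
      (a := fun f : ℝ => ∑ Δ ∈ Fs, |dissProb atoms Δ (scaleDB D f) / f ^ n - c|)
    · filter_upwards [self_mem_nhdsWithin] with f hf
      obtain ⟨Δf, hΔfsafe, heq⟩ := propScore_attained atoms (scaleDB D f)
      have hΔf : Δf ∈ Fs := Finset.mem_filter.2 ⟨Finset.mem_univ _, hΔfsafe⟩
      rw [heq, Real.norm_eq_abs]
      exact Finset.single_le_sum
        (f := fun Δ => |dissProb atoms Δ (scaleDB D f) / f ^ n - c|)
        (fun Δ _ => abs_nonneg _) hΔf
    · have h := tendsto_finset_sum (f := fun Δ (f : ℝ) =>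
          |dissProb atoms Δ (scaleDB D f) / f ^ n - c|) (a := fun _ => (0:ℝ)) Fs
        (fun Δ hΔ => by
          have h0 := ((TΔ Δ hΔ).sub (tendsto_const_nhds (x := c))).abs
          simpa using h0)
      simpa using h
  have hev : (fun f : ℝ =>
      (propScore atoms (scaleDB D f) - queryProb atoms (scaleDB D f)) /
        queryProb atoms (scaleDB D f)) =ᶠ[nhdsWithin 0 (Set.Ioi 0)]
      (fun f : ℝ =>
        (propScore atoms (scaleDB D f) / f ^ n - queryProb atoms (scaleDB D f) / f ^ n) /
          (queryProb atoms (scaleDB D f) / f ^ n)) := by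
    filter_upwards [self_mem_nhdsWithin,
      Tg.eventually (eventually_gt_nhds hcpos)] with f hf hgpos
    have hfn : (f : ℝ) ^ n ≠ 0 := pow_ne_zero _ (ne_of_gt (Set.mem_Ioi.1 hf))
    have hg : queryProb atoms (scaleDB D f) ≠ 0 := by
      intro h0
      rw [h0, zero_div] at hgpos
      exact lt_irrefl _ hgpos
    field_simp
  have Tfinal := (Tρ.sub Tg).div Tg (ne_of_gt hcpos)
  rw [sub_self, zero_div] at Tfinal
  exact Tendsto.congr' hev.symm Tfinal

end

end PDB
end

section
/- Let q be a Boolean self-join-free conjunctive query over a tuple-independent probabilistic database D, and let Δ ≼ Δ' be two dissociations of q such that ȳ_i = ȳ'_i for every probabilistic relation R_i, i.e., the added variables differ only on deterministic relations (relations all of whose tuples have probability 1). Then P(q^Δ) = P(q^{Δ'}): dissociating a deterministic relation does not change the probability. -/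
open scoped Classical

namespace PDB

noncomputable section

variable {A V dom : Type*}

/-! ### Auxiliary machinery for Statement 15 -/

section Aux

variable {A V dom : Type*}

/-- The tuples of a dissociated relation, depending only on the added variable set. -/
def dtup [Fintype dom] (atoms : A → Finset V) (D : DB atoms dom) (i : A) (E : Finset V) :
    Finset ({x // x ∈ atoms i ∪ E} → dom) :=
  Finset.univ.filter (fun t => restrictTup Finset.subset_union_left t ∈ D.tuples i)

/-- The dissociated query probability with the deterministic relation `i0` marginalized
out; depends on the dissociation only away from `i0`. -/
def auxProb [Fintype A] [Fintype dom] (atoms : A → Finset V) (D : DB atoms dom) (i0 : A)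
    (E : {j : A // j ≠ i0} → Finset V) : ℝ :=
  ∑ W : ∀ j : {j : A // j ≠ i0}, {t // t ∈ dtup atoms D j.1 (E j)} → Bool,
    (∏ j : {j : A // j ≠ i0}, ∏ t : {t // t ∈ dtup atoms D j.1 (E j)},
        if W j t = true then D.prob j.1 (restrictTup Finset.subset_union_left t.1)
        else 1 - D.prob j.1 (restrictTup Finset.subset_union_left t.1)) *
      (if ∃ ν : V → dom, restrict atoms i0 ν ∈ D.tuples i0 ∧
            ∀ j : {j : A // j ≠ i0},
              ∃ h : (fun x : {x // x ∈ atoms j.1 ∪ E j} => ν x.1) ∈ dtup atoms D j.1 (E j),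
                W j ⟨_, h⟩ = true
        then 1 else 0)

set_option maxHeartbeats 4000000 in
lemma diss_eq_auxProb [Fintype A] [Fintype V] [Fintype dom]
    (atoms Δ : A → Finset V) (D : DB atoms dom) (i0 : A)
    (hdet : Deterministic D i0) :
    dissProb atoms Δ D = auxProb atoms D i0 (fun j => Δ j.1) := by
  classical
  set E := dissDB atoms Δ D with hE
  set β : A → Type _ := fun i => {t // t ∈ E.tuples i} → Bool with hβ
  set e := Equiv.piSplitAt i0 β with he
  have h1 : ∀ p, (e.symm p) i0 = p.1 := fun p => congrArg Prod.fst (e.apply_symm_apply p)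
  have h2 : ∀ p (j : {j : A // j ≠ i0}), (e.symm p) j.1 = p.2 j :=
    fun p j => congrFun (congrArg Prod.snd (e.apply_symm_apply p)) j
  set F : (∀ i : A, β i) → ℝ := fun W =>
    (∏ i : A, ∏ t : {t // t ∈ E.tuples i},
        if W i t = true then E.prob i t.1 else 1 - E.prob i t.1) *
      (if ∃ ν : V → dom, ∀ i : A,
            ∃ h : restrict (dissAtoms atoms Δ) i ν ∈ E.tuples i,
              W i ⟨restrict (dissAtoms atoms Δ) i ν, h⟩ = true
        then 1 else 0) with hF
  have hw1 : ∀ b : β i0,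
      (∏ t : {t // t ∈ E.tuples i0}, if b t = true then E.prob i0 t.1 else 1 - E.prob i0 t.1)
        = (if ∀ t : {t // t ∈ E.tuples i0}, b t = true then (1:ℝ) else 0) := by
    intro b
    have hone : ∀ t : {t // t ∈ E.tuples i0}, E.prob i0 t.1 = 1 := fun t =>
      hdet _ (Finset.mem_filter.mp t.2).2
    calc (∏ t : {t // t ∈ E.tuples i0}, if b t = true then E.prob i0 t.1 else 1 - E.prob i0 t.1)
        = ∏ t : {t // t ∈ E.tuples i0}, if b t = true then (1:ℝ) else 0 :=
          Finset.prod_congr rfl (fun t _ => by rw [hone t]; norm_num)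
      _ = _ := Fintype.prod_boole
  have hterm : ∀ (b : β i0) (Wr : ∀ j : {j : A // j ≠ i0}, β j.1),
      F (e.symm (b, Wr)) = (if ∀ t : {t // t ∈ E.tuples i0}, b t = true then (1:ℝ) else 0) *
        ((∏ j : {j : A // j ≠ i0}, ∏ t : {t // t ∈ E.tuples j.1},
            if Wr j t = true then E.prob j.1 t.1 else 1 - E.prob j.1 t.1) *
          (if ∃ ν : V → dom, ∀ i : A,
              ∃ h : restrict (dissAtoms atoms Δ) i ν ∈ E.tuples i,
                (e.symm (b, Wr)) i ⟨restrict (dissAtoms atoms Δ) i ν, h⟩ = true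
            then 1 else 0)) := by
    intro b Wr
    rw [hF]
    dsimp only
    rw [Fintype.prod_eq_mul_prod_compl i0,
        Finset.prod_subtype (p := fun j : A => j ≠ i0) ({i0}ᶜ : Finset A) (fun x => by simp)
          (fun i => ∏ t : {t // t ∈ E.tuples i},
            if (e.symm (b, Wr)) i t = true then E.prob i t.1 else 1 - E.prob i t.1)]
    simp only [h1, h2]
    rw [hw1 b, mul_assoc]
  have hsat : ∀ (Wr : ∀ j : {j : A // j ≠ i0}, β j.1),
      (∃ ν : V → dom, ∀ i : A,
          ∃ h : restrict (dissAtoms atoms Δ) i ν ∈ E.tuples i,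
            (e.symm ((fun _ => true), Wr)) i ⟨restrict (dissAtoms atoms Δ) i ν, h⟩ = true)
        ↔ (∃ ν : V → dom, restrict atoms i0 ν ∈ D.tuples i0 ∧
            ∀ j : {j : A // j ≠ i0},
              ∃ h : (fun x : {x // x ∈ atoms j.1 ∪ Δ j.1} => ν x.1) ∈ dtup atoms D j.1 (Δ j.1),
                Wr j ⟨_, h⟩ = true) := by
    intro Wr
    constructor
    · rintro ⟨ν, hν⟩
      refine ⟨ν, ?_, ?_⟩
      · obtain ⟨h, -⟩ := hν i0
        exact (Finset.mem_filter.mp h).2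
      · intro j
        obtain ⟨h, hw⟩ := hν j.1
        refine ⟨h, ?_⟩
        rw [h2 ((fun _ => true), Wr) j] at hw
        exact hw
    · rintro ⟨ν, hmem, hrest⟩
      refine ⟨ν, fun i => ?_⟩
      by_cases hi : i = i0
      · subst hi
        refine ⟨Finset.mem_filter.mpr ⟨Finset.mem_univ _, hmem⟩, ?_⟩
        exact congrFun (h1 ((fun _ => true), Wr)) _
      · obtain ⟨h, hw⟩ := hrest ⟨i, hi⟩
        refine ⟨h, ?_⟩
        rw [h2 ((fun _ => true), Wr) ⟨i, hi⟩]
        exact hw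
  have hinner : ∀ (Wr : ∀ j : {j : A // j ≠ i0}, β j.1),
      (∑ b : β i0, F (e.symm (b, Wr)))
        = (∏ j : {j : A // j ≠ i0}, ∏ t : {t // t ∈ E.tuples j.1},
            if Wr j t = true then E.prob j.1 t.1 else 1 - E.prob j.1 t.1) *
          (if ∃ ν : V → dom, restrict atoms i0 ν ∈ D.tuples i0 ∧
              ∀ j : {j : A // j ≠ i0},
                ∃ h : (fun x : {x // x ∈ atoms j.1 ∪ Δ j.1} => ν x.1) ∈ dtup atoms D j.1 (Δ j.1),
                  Wr j ⟨_, h⟩ = true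
            then 1 else 0) := by
    intro Wr
    have s1 : (∑ b : β i0, F (e.symm (b, Wr)))
        = ∑ b : β i0, (if ∀ t : {t // t ∈ E.tuples i0}, b t = true then (1:ℝ) else 0) *
            ((∏ j : {j : A // j ≠ i0}, ∏ t : {t // t ∈ E.tuples j.1},
                if Wr j t = true then E.prob j.1 t.1 else 1 - E.prob j.1 t.1) *
              (if ∃ ν : V → dom, ∀ i : A,
                  ∃ h : restrict (dissAtoms atoms Δ) i ν ∈ E.tuples i,
                    (e.symm (b, Wr)) i ⟨restrict (dissAtoms atoms Δ) i ν, h⟩ = true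
                then 1 else 0)) := Finset.sum_congr rfl (fun b _ => hterm b Wr)
    rw [s1, Finset.sum_eq_single ((fun _ => true) : β i0)]
    · rw [if_pos (fun t => rfl), one_mul]
      exact congrArg₂ (· * ·) rfl (if_congr (hsat Wr) rfl rfl)
    · intro b _ hb
      have h : ¬ ∀ t : {t // t ∈ E.tuples i0}, b t = true := fun h =>
        hb (funext fun t => h t)
      rw [if_neg h, zero_mul]
    · intro h
      exact absurd (Finset.mem_univ _) h
  calc dissProb atoms Δ D = ∑ W : ∀ i : A, β i, F W := by
        unfold dissProb queryProb
        congr 1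
        funext W
        rw [hF]
        dsimp only
        congr 1
        congr 1
    _ = ∑ p : β i0 × (∀ j : {j : A // j ≠ i0}, β j.1), F (e.symm p) :=
        (Equiv.sum_comp e.symm F).symm
    _ = ∑ b : β i0, ∑ Wr : ∀ j : {j : A // j ≠ i0}, β j.1, F (e.symm (b, Wr)) :=
        Fintype.sum_prod_type (fun p => F (e.symm p))
    _ = ∑ Wr : ∀ j : {j : A // j ≠ i0}, β j.1, ∑ b : β i0, F (e.symm (b, Wr)) :=
        Finset.sum_comm
    _ = ∑ Wr : ∀ j : {j : A // j ≠ i0}, β j.1,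
          (∏ j : {j : A // j ≠ i0}, ∏ t : {t // t ∈ E.tuples j.1},
              if Wr j t = true then E.prob j.1 t.1 else 1 - E.prob j.1 t.1) *
            (if ∃ ν : V → dom, restrict atoms i0 ν ∈ D.tuples i0 ∧
                ∀ j : {j : A // j ≠ i0},
                  ∃ h : (fun x : {x // x ∈ atoms j.1 ∪ Δ j.1} => ν x.1) ∈ dtup atoms D j.1 (Δ j.1),
                    Wr j ⟨_, h⟩ = true
              then 1 else 0) := Finset.sum_congr rfl (fun Wr _ => hinner Wr)
    _ = auxProb atoms D i0 (fun j => Δ j.1) := by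
        unfold auxProb
        congr 1
        funext Wr
        congr 1
        congr 1

lemma diss_eq_of_det [Fintype A] [Fintype V] [Fintype dom]
    (atoms : A → Finset V) (D : DB atoms dom) :
    ∀ (n : ℕ) (Δ Δ' : A → Finset V),
      (Finset.univ.filter fun i => Δ i ≠ Δ' i).card = n →
      (∀ i, Δ i ≠ Δ' i → Deterministic D i) →
      dissProb atoms Δ D = dissProb atoms Δ' D := by
  intro n
  induction n with
  | zero =>
    intro Δ Δ' hcard _
    have heq : ∀ i, Δ i = Δ' i := by
      intro i
      by_contra h
      have hi : i ∈ Finset.univ.filter fun i => Δ i ≠ Δ' i := by simp [h]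
      rw [Finset.card_eq_zero.mp hcard] at hi
      exact absurd hi (Finset.notMem_empty i)
    rw [funext heq]
  | succ n ih =>
    intro Δ Δ' hcard hdet
    have hne : (Finset.univ.filter fun i => Δ i ≠ Δ' i).Nonempty := by
      rw [← Finset.card_pos, hcard]; omega
    obtain ⟨i0, hi0⟩ := hne
    have hi0' : Δ i0 ≠ Δ' i0 := by simpa using hi0
    have hd0 : Deterministic D i0 := hdet i0 hi0'
    set Δ'' := Function.update Δ i0 (Δ' i0) with hΔ''
    have step1 : dissProb atoms Δ D = dissProb atoms Δ'' D := by
      rw [diss_eq_auxProb atoms Δ D i0 hd0, diss_eq_auxProb atoms Δ'' D i0 hd0]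
      have : (fun j : {j : A // j ≠ i0} => Δ j.1) = (fun j : {j : A // j ≠ i0} => Δ'' j.1) := by
        funext j
        simp [hΔ'', Function.update_of_ne j.2]
      rw [this]
    have hset : (Finset.univ.filter fun i => Δ'' i ≠ Δ' i)
        = (Finset.univ.filter fun i => Δ i ≠ Δ' i).erase i0 := by
      ext i
      by_cases h : i = i0
      · subst h
        simp [hΔ'']
      · simp [hΔ'', Function.update_of_ne h, h]
    have step2 : dissProb atoms Δ'' D = dissProb atoms Δ' D := by
      refine ih Δ'' Δ' ?_ ?_
      · rw [hset, Finset.card_erase_of_mem hi0, hcard]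
        omega
      · intro i h
        have hne' : i ≠ i0 := by
          intro he
          subst he
          rw [hΔ''] at h
          simp at h
        refine hdet i ?_
        rw [hΔ''] at h
        rwa [Function.update_of_ne hne'] at h
    rw [step1, step2]

end Aux

/-- Dissociating a deterministic relation does not change the
probability.  If `Δ ≼ Δ'` are two dissociations of a Boolean self-join-free conjunctive
query whose added variable sets agree on every probabilistic relation (i.e. they differ
only on deterministic relations, all of whose tuples have probability 1), then
`P(q^Δ) = P(q^{Δ'})`. -/
theorem deterministic_dissociation_invariant
    {A V dom : Type*} [Fintype A] [Fintype V] [Fintype dom]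
    (atoms : A → Finset V) (D : DB atoms dom) (hD : D.Valid)
    (Δ Δ' : A → Finset V) (hΔ : IsDiss atoms ∅ Δ) (hΔ' : IsDiss atoms ∅ Δ')
    (hle : dissLE Δ Δ')
    (hdet : ∀ i : A, ¬ Deterministic D i → Δ i = Δ' i) :
    dissProb atoms Δ D = dissProb atoms Δ' D := by
  refine diss_eq_of_det atoms D _ Δ Δ' rfl ?_
  intro i hne
  by_contra hnd
  exact hne (hdet i hnd)

end

end PDB
end

section
/- For every k ≥ 2, the k-chain query q(x_0, x_k) :- R_1(x_0,x_1), R_2(x_1,x_2), …, R_k(x_{k−1},x_k), whose head variables x_0 and x_k are treated as constants, has exactly C_{k−1} minimal safe dissociations (equivalently, minimal query plans), where C_n = (1/(n+1))·binom(2n, n) is the n-th Catalan number; in particular, the 8-chain query has 429 minimal safe dissociations. -/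
/-!
A dissociation of the `k`-chain query is determined by the at-sets `at(x_1), …, at(x_{k-1})` of
its existential variables, each containing the two atoms adjacent to its variable, and it is safe
exactly when these sets are laminar. The largest at-set absorbs every at-set it meets, and
adjacent at-sets meet, so some variable `x_j` lies in every atom. In a minimal safe dissociation
every other at-set is then confined to its own side of `x_j`, so minimal safe dissociations are
obtained, each exactly once, by choosing `x_j` and gluing minimal safe dissociations of the
subchains `x_0 … x_j` and `x_j … x_k`. Their numbers thus satisfy Catalan's recurrence.
-/

open scoped Classical

namespace PDB

noncomputable section

variable {A V dom : Type*}

lemma mem_dissAtoms {atoms Δ : A → Finset V} {i : A} {v : V} :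
    v ∈ dissAtoms atoms Δ i ↔ v ∈ atoms i ∨ v ∈ Δ i :=
  Finset.mem_union

lemma mem_atOf {atoms : A → Finset V} {S : Finset A} {x : V} {i : A} :
    i ∈ atOf atoms S x ↔ i ∈ S ∧ x ∈ atoms i :=
  Finset.mem_filter

lemma mem_varsOf [Fintype A] {atoms : A → Finset V} {v : V} :
    v ∈ varsOf atoms ↔ ∃ i, v ∈ atoms i := by
  simp [varsOf, Finset.mem_sup]

lemma hierOn_iff_disjoint {atoms : A → Finset V} {S : Finset A} {H : Finset V} :
    HierOn atoms S H ↔ ∀ x ∉ H, ∀ y ∉ H,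
      atOf atoms S x ⊆ atOf atoms S y ∨ Disjoint (atOf atoms S x) (atOf atoms S y) ∨
        atOf atoms S y ⊆ atOf atoms S x := by
  simp only [HierOn, Finset.disjoint_iff_inter_eq_empty]

lemma minSafeDiss_iff_minimal [Fintype A] {atoms : A → Finset V} {H : Finset V}
    {Δ : A → Finset V} : MinSafeDiss atoms H Δ ↔ Minimal (SafeDiss atoms H) Δ := by
  rw [minimal_iff]
  exact Iff.rfl.and <|
    forall_congr' fun _ => imp_congr_right fun _ => imp_congr_right fun _ => eq_comm

/-- The at-sets of a dissociation of the chain segment whose atoms `a, …, b - 1` are numbered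
so that atom `i` joins `x_i` and `x_{i+1}`, and whose end variables `x_a`, `x_b` are head
variables: `S x` is the set of atoms containing the existential variable `x`. The dissociation
is safe exactly when the at-sets are laminar. -/
structure IsSafeAtFamily (a b : ℕ) (S : ℕ → Finset ℕ) : Prop where
  pred_mem : ∀ x ∈ Set.Ioo a b, x - 1 ∈ S x
  self_mem : ∀ x ∈ Set.Ioo a b, x ∈ S x
  subset_Ico : ∀ x ∈ Set.Ioo a b, S x ⊆ Finset.Ico a b
  eq_empty : ∀ x ∉ Set.Ioo a b, S x = ∅
  laminar : ∀ x ∈ Set.Ioo a b, ∀ y ∈ Set.Ioo a b,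
    S x ⊆ S y ∨ Disjoint (S x) (S y) ∨ S y ⊆ S x

def restrictSegment (a b : ℕ) (S : ℕ → Finset ℕ) : ℕ → Finset ℕ :=
  fun x => if x ∈ Set.Ioo a b then S x ∩ Finset.Ico a b else ∅

def glue (j : ℕ) (T : Finset ℕ) (L R : ℕ → Finset ℕ) : ℕ → Finset ℕ :=
  fun x => if x < j then L x else if x = j then T else R x

section Glue

variable {j x : ℕ} {T : Finset ℕ} {L R : ℕ → Finset ℕ}

@[simp] lemma glue_of_lt (h : x < j) : glue j T L R x = L x := if_pos h

@[simp] lemma glue_self : glue j T L R j = T := by simp [glue]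

@[simp] lemma glue_of_gt (h : j < x) : glue j T L R x = R x := by
  simp [glue, h.not_gt, h.ne']

lemma glue_le {S : ℕ → Finset ℕ} (hL : L ≤ S) (hT : T ⊆ S j) (hR : R ≤ S) :
    glue j T L R ≤ S := by
  intro x
  rcases lt_trichotomy x j with h | rfl | h
  · simpa [h] using hL x
  · simpa using hT
  · simpa [h] using hR x

lemma glue_mono {L' R' : ℕ → Finset ℕ} (hL : L ≤ L') (hR : R ≤ R') :
    glue j T L R ≤ glue j T L' R' := by
  intro x
  rcases lt_trichotomy x j with h | rfl | h
  · simpa [h] using hL x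
  · simp
  · simpa [h] using hR x

end Glue

lemma restrictSegment_le (a b : ℕ) (S : ℕ → Finset ℕ) : restrictSegment a b S ≤ S := by
  intro x
  unfold restrictSegment
  split_ifs
  exacts [Finset.inter_subset_left, Finset.empty_subset _]

lemma restrictSegment_mono {a b : ℕ} {S S' : ℕ → Finset ℕ} (h : S ≤ S') :
    restrictSegment a b S ≤ restrictSegment a b S' := by
  intro x
  unfold restrictSegment
  split_ifs
  exacts [Finset.inter_subset_inter_right (h x), le_rfl]

namespace IsSafeAtFamily

variable {a b j : ℕ} {S L R : ℕ → Finset ℕ}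

lemma restrictSegment (hS : IsSafeAtFamily a b S) {a' b' : ℕ} (ha : a ≤ a') (hb : b' ≤ b) :
    IsSafeAtFamily a' b' (restrictSegment a' b' S) := by
  have hsub : ∀ x ∈ Set.Ioo a' b', x ∈ Set.Ioo a b := fun x hx => ⟨by grind, by grind⟩
  have heq : ∀ x ∈ Set.Ioo a' b', PDB.restrictSegment a' b' S x = S x ∩ Finset.Ico a' b' :=
    fun x hx => if_pos hx
  refine ⟨fun x hx => ?_, fun x hx => ?_, fun x hx => ?_, fun x hx => if_neg hx,
    fun x hx y hy => ?_⟩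
  · rw [heq x hx, Finset.mem_inter, Finset.mem_Ico]
    exact ⟨hS.pred_mem x (hsub x hx), by grind⟩
  · rw [heq x hx, Finset.mem_inter, Finset.mem_Ico]
    exact ⟨hS.self_mem x (hsub x hx), by grind⟩
  · rw [heq x hx]
    exact Finset.inter_subset_right
  · rw [heq x hx, heq y hy]
    rcases hS.laminar x (hsub x hx) y (hsub y hy) with h | h | h
    · exact Or.inl (Finset.inter_subset_inter_right h)
    · exact Or.inr (Or.inl (h.mono Finset.inter_subset_left Finset.inter_subset_left))
    · exact Or.inr (Or.inr (Finset.inter_subset_inter_right h))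

lemma glue_subset_Ico (hL : IsSafeAtFamily a j L) (hR : IsSafeAtFamily j b R)
    (haj : a < j) (hjb : j < b) :
    ∀ x ∈ Set.Ioo a b, PDB.glue j (Finset.Ico a b) L R x ⊆ Finset.Ico a b := by
  rintro x ⟨hax, hxb⟩
  rcases lt_trichotomy x j with h | rfl | h
  · rw [glue_of_lt h]
    exact (hL.subset_Ico x ⟨hax, h⟩).trans (Finset.Ico_subset_Ico_right hjb.le)
  · simp
  · rw [glue_of_gt h]
    exact (hR.subset_Ico x ⟨h, hxb⟩).trans (Finset.Ico_subset_Ico_left haj.le)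

lemma glue (hL : IsSafeAtFamily a j L) (hR : IsSafeAtFamily j b R) (haj : a < j) (hjb : j < b) :
    IsSafeAtFamily a b (PDB.glue j (Finset.Ico a b) L R) := by
  have hsub := glue_subset_Ico hL hR haj hjb
  refine ⟨fun x hx => ?_, fun x hx => ?_, hsub, fun x hx => ?_, fun x hx y hy => ?_⟩
  · obtain ⟨hax, hxb⟩ := hx
    rcases lt_trichotomy x j with h | rfl | h
    · simpa [h] using hL.pred_mem x ⟨hax, h⟩
    · simp only [glue_self, Finset.mem_Ico]; omega
    · simpa [h] using hR.pred_mem x ⟨h, hxb⟩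
  · obtain ⟨hax, hxb⟩ := hx
    rcases lt_trichotomy x j with h | rfl | h
    · simpa [h] using hL.self_mem x ⟨hax, h⟩
    · simp only [glue_self, Finset.mem_Ico]; omega
    · simpa [h] using hR.self_mem x ⟨h, hxb⟩
  · rcases lt_trichotomy x j with h | rfl | h
    · rw [glue_of_lt h]
      exact hL.eq_empty x fun h' => hx ⟨h'.1, h.trans hjb⟩
    · exact absurd ⟨haj, hjb⟩ hx
    · rw [glue_of_gt h]
      exact hR.eq_empty x fun h' => hx ⟨haj.trans h, h'.2⟩
  · obtain ⟨hax, hxb⟩ := hx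
    obtain ⟨hay, hyb⟩ := hy
    rcases lt_trichotomy x j with hx | rfl | hx
    · rcases lt_trichotomy y j with hy | rfl | hy
      · simpa [hx, hy] using hL.laminar x ⟨hax, hx⟩ y ⟨hay, hy⟩
      · exact Or.inl (glue_self (L := L) ▸ hsub x ⟨hax, hxb⟩)
      · refine Or.inr (Or.inl ?_)
        rw [glue_of_lt hx, glue_of_gt hy]
        exact (Finset.Ico_disjoint_Ico_consecutive a j b).mono (hL.subset_Ico x ⟨hax, hx⟩)
          (hR.subset_Ico y ⟨hy, hyb⟩)
    · exact Or.inr (Or.inr (glue_self (L := L) ▸ hsub y ⟨hay, hyb⟩))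
    · rcases lt_trichotomy y j with hy | rfl | hy
      · refine Or.inr (Or.inl ?_)
        rw [glue_of_gt hx, glue_of_lt hy]
        exact (Finset.Ico_disjoint_Ico_consecutive a j b).symm.mono
          (hR.subset_Ico x ⟨hx, hxb⟩) (hL.subset_Ico y ⟨hay, hy⟩)
      · exact Or.inl (glue_self (L := L) ▸ hsub x ⟨hax, hxb⟩)
      · simpa [hx, hy] using hR.laminar x ⟨hx, hxb⟩ y ⟨hy, hyb⟩

lemma restrictSegment_glue_left (hL : IsSafeAtFamily a j L) (T : Finset ℕ) (R : ℕ → Finset ℕ) :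
    PDB.restrictSegment a j (PDB.glue j T L R) = L := by
  funext x
  unfold PDB.restrictSegment
  split_ifs with hx
  · rw [glue_of_lt hx.2]
    exact Finset.inter_eq_left.2 (hL.subset_Ico x hx)
  · exact (hL.eq_empty x hx).symm

lemma restrictSegment_glue_right (hR : IsSafeAtFamily j b R) (T : Finset ℕ) (L : ℕ → Finset ℕ) :
    PDB.restrictSegment j b (PDB.glue j T L R) = R := by
  funext x
  unfold PDB.restrictSegment
  split_ifs with hx
  · rw [glue_of_gt hx.1]
    exact Finset.inter_eq_left.2 (hR.subset_Ico x hx)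
  · exact (hR.eq_empty x hx).symm

lemma glue_eq_Ico_iff (hL : IsSafeAtFamily a j L) (hR : IsSafeAtFamily j b R)
    (haj : a < j) (hjb : j < b) {x : ℕ} (hx : x ∈ Set.Ioo a b) :
    PDB.glue j (Finset.Ico a b) L R x = Finset.Ico a b ↔ x = j := by
  refine ⟨fun h => ?_, fun h => h ▸ glue_self⟩
  rcases lt_trichotomy x j with hxj | rfl | hxj
  · rw [glue_of_lt hxj] at h
    have := hL.subset_Ico x ⟨hx.1, hxj⟩ (h ▸ Finset.mem_Ico.2 ⟨by omega, by omega⟩ : b - 1 ∈ L x)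
    simp only [Finset.mem_Ico] at this
    omega
  · rfl
  · rw [glue_of_gt hxj] at h
    have := hR.subset_Ico x ⟨hxj, hx.2⟩ (h ▸ Finset.mem_Ico.2 ⟨le_rfl, by omega⟩ : a ∈ R x)
    simp only [Finset.mem_Ico] at this
    omega

lemma exists_eq_Ico (hS : IsSafeAtFamily a b S) (hab : a + 1 < b) :
    ∃ j ∈ Set.Ioo a b, S j = Finset.Ico a b := by
  obtain ⟨j, hj, hmax⟩ := Finset.exists_max_image (Finset.Ioo a b) (fun x => (S x).card)
    ⟨a + 1, Finset.mem_Ioo.2 ⟨by omega, hab⟩⟩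
  replace hj : j ∈ Set.Ioo a b := Finset.mem_Ioo.1 hj
  have absorb : ∀ x ∈ Set.Ioo a b, ¬ Disjoint (S x) (S j) → S x ⊆ S j := by
    intro x hx hmeet
    rcases hS.laminar x hx j hj with h | h | h
    · exact h
    · exact absurd h hmeet
    · exact (Finset.eq_of_subset_of_card_le h (hmax x (Finset.mem_Ioo.2 hx))).ge
  have step : ∀ x ∈ Set.Ioo a b, x + 1 ∈ Set.Ioo a b → (S x ⊆ S j ↔ S (x + 1) ⊆ S j) := by
    intro x hx hx'
    have hx_mem : x ∈ S (x + 1) := by simpa using hS.pred_mem (x + 1) hx'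
    refine ⟨fun h => absorb _ hx' ?_, fun h => absorb _ hx ?_⟩ <;>
      rw [Finset.not_disjoint_iff]
    exacts [⟨x, hx_mem, h (hS.self_mem x hx)⟩, ⟨x, hS.self_mem x hx, h hx_mem⟩]
  have chain : ∀ x ∈ Set.Ioo a b, ∀ y ∈ Set.Ioo a b, x ≤ y → (S x ⊆ S j ↔ S y ⊆ S j) := by
    intro x ⟨hax, _⟩ y hy hxy
    induction y, hxy using Nat.le_induction with
    | base => rfl
    | succ y hxy ih =>
      obtain ⟨-, hyb⟩ := hy
      exact (ih ⟨by omega, by omega⟩).trans (step y ⟨by omega, by omega⟩ ⟨by omega, hyb⟩)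
  have all : ∀ x ∈ Set.Ioo a b, S x ⊆ S j := by
    intro x hx
    rcases le_total x j with h | h
    · exact (chain x hx j hj h).2 le_rfl
    · exact (chain j hj x hx h).1 le_rfl
  refine ⟨j, hj, (hS.subset_Ico j hj).antisymm fun t ht => ?_⟩
  rw [Finset.mem_Ico] at ht
  rcases ht.1.eq_or_lt with rfl | hat
  · exact all (a + 1) ⟨by omega, hab⟩ (by simpa using hS.pred_mem (a + 1) ⟨by omega, hab⟩)
  · exact all t ⟨hat, ht.2⟩ (hS.self_mem t ⟨hat, ht.2⟩)

lemma exists_eq_glue_of_minimal (hS : Minimal (IsSafeAtFamily a b) S) (hab : a + 1 < b) :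
    ∃ j ∈ Set.Ioo a b,
      S = PDB.glue j (Finset.Ico a b) (PDB.restrictSegment a j S) (PDB.restrictSegment j b S) := by
  obtain ⟨j, hj, hroot⟩ := hS.prop.exists_eq_Ico hab
  refine ⟨j, hj, (hS.eq_of_le ?_ ?_).symm⟩
  · exact (hS.prop.restrictSegment le_rfl hj.2.le).glue
      (hS.prop.restrictSegment hj.1.le le_rfl) hj.1 hj.2
  · exact glue_le (restrictSegment_le _ _ _) hroot.ge (restrictSegment_le _ _ _)

lemma minimal_glue_iff (hL : IsSafeAtFamily a j L) (hR : IsSafeAtFamily j b R)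
    (haj : a < j) (hjb : j < b) :
    Minimal (IsSafeAtFamily a b) (PDB.glue j (Finset.Ico a b) L R) ↔
      Minimal (IsSafeAtFamily a j) L ∧ Minimal (IsSafeAtFamily j b) R := by
  simp only [minimal_iff]
  constructor
  · rintro ⟨-, hmin⟩
    refine ⟨⟨hL, fun L' hL' hle => ?_⟩, ⟨hR, fun R' hR' hle => ?_⟩⟩
    · have h := hmin (hL'.glue hR haj hjb) (glue_mono hle le_rfl)
      rw [← hL.restrictSegment_glue_left (Finset.Ico a b) R, h,
        hL'.restrictSegment_glue_left]
    · have h := hmin (hL.glue hR' haj hjb) (glue_mono le_rfl hle)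
      rw [← hR.restrictSegment_glue_right (Finset.Ico a b) L, h,
        hR'.restrictSegment_glue_right]
  · rintro ⟨⟨-, hLmin⟩, ⟨-, hRmin⟩⟩
    refine ⟨hL.glue hR haj hjb, fun S' hS' hle => ?_⟩
    obtain ⟨j', hj', hroot⟩ := hS'.exists_eq_Ico (by omega)
    obtain rfl : j' = j := (glue_eq_Ico_iff hL hR haj hjb hj').1
      ((glue_subset_Ico hL hR haj hjb j' hj').antisymm (hroot ▸ hle j'))
    have hL' := hLmin (hS'.restrictSegment le_rfl hjb.le)
      (hL.restrictSegment_glue_left (Finset.Ico a b) R ▸ restrictSegment_mono hle)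
    have hR' := hRmin (hS'.restrictSegment haj.le le_rfl)
      (hR.restrictSegment_glue_right (Finset.Ico a b) L ▸ restrictSegment_mono hle)
    refine le_antisymm ?_ hle
    rw [hL', hR']
    exact glue_le (restrictSegment_le _ _ _) hroot.ge (restrictSegment_le _ _ _)

end IsSafeAtFamily

lemma isSafeAtFamily_bot_of_le {a b : ℕ} (hab : b ≤ a + 1) : IsSafeAtFamily a b ⊥ := by
  have hempty : ∀ x, x ∉ Set.Ioo a b := by rintro x ⟨_, _⟩; omega
  exact ⟨fun x hx => absurd hx (hempty x), fun x hx => absurd hx (hempty x),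
    fun x hx => absurd hx (hempty x), fun _ _ => rfl, fun x hx => absurd hx (hempty x)⟩

lemma card_minimal_isSafeAtFamily_of_le {a b : ℕ} (hab : b ≤ a + 1) :
    Nat.card {S // Minimal (IsSafeAtFamily a b) S} = 1 := by
  have heq : ∀ S, IsSafeAtFamily a b S → S = ⊥ := fun S hS =>
    funext fun x => hS.eq_empty x fun ⟨_, _⟩ => by omega
  rw [Nat.card_eq_one_iff_unique]
  exact ⟨⟨fun S S' => Subtype.ext ((heq _ S.2.prop).trans (heq _ S'.2.prop).symm)⟩,
    ⟨⟨⊥, isSafeAtFamily_bot_of_le hab, fun _ _ _ => bot_le⟩⟩⟩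

def glueMinimal {a b : ℕ}
    (t : Σ j : Finset.Ioo a b,
      {L // Minimal (IsSafeAtFamily a j) L} × {R // Minimal (IsSafeAtFamily j b) R}) :
    {S // Minimal (IsSafeAtFamily a b) S} :=
  ⟨glue t.1 (Finset.Ico a b) t.2.1 t.2.2,
    (IsSafeAtFamily.minimal_glue_iff t.2.1.2.prop t.2.2.2.prop (Finset.mem_Ioo.1 t.1.2).1
      (Finset.mem_Ioo.1 t.1.2).2).2 ⟨t.2.1.2, t.2.2.2⟩⟩

lemma glueMinimal_bijective {a b : ℕ} (hab : a + 1 < b) :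
    Function.Bijective (glueMinimal (a := a) (b := b)) := by
  constructor
  · rintro ⟨⟨j, hj⟩, ⟨L, hL⟩, ⟨R, hR⟩⟩ ⟨⟨j', hj'⟩, ⟨L', hL'⟩, ⟨R', hR'⟩⟩ h
    replace h : glue j (Finset.Ico a b) L R = glue j' (Finset.Ico a b) L' R' :=
      congrArg Subtype.val h
    rw [Finset.mem_Ioo] at hj hj'
    obtain rfl : j' = j := (hL.prop.glue_eq_Ico_iff hR.prop hj.1 hj.2 hj').1 (h ▸ glue_self)
    obtain rfl : L = L' := by
      rw [← hL.prop.restrictSegment_glue_left (Finset.Ico a b) R, h,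
        hL'.prop.restrictSegment_glue_left]
    obtain rfl : R = R' := by
      rw [← hR.prop.restrictSegment_glue_right (Finset.Ico a b) L, h,
        hR'.prop.restrictSegment_glue_right]
    rfl
  · rintro ⟨S, hS⟩
    obtain ⟨j, hj, hSj⟩ := IsSafeAtFamily.exists_eq_glue_of_minimal hS hab
    have hparts := (IsSafeAtFamily.minimal_glue_iff (hS.prop.restrictSegment le_rfl hj.2.le)
      (hS.prop.restrictSegment hj.1.le le_rfl) hj.1 hj.2).1 (hSj ▸ hS)
    exact ⟨⟨⟨j, Finset.mem_Ioo.2 hj⟩, ⟨_, hparts.1⟩, ⟨_, hparts.2⟩⟩, Subtype.ext hSj.symm⟩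

lemma catalan_pos (n : ℕ) : 0 < catalan n :=
  Nat.pos_of_mul_pos_left ((succ_mul_catalan_eq_centralBinom n).symm ▸ Nat.centralBinom_pos n)

lemma catalan_eq_sum_Ioo {a b : ℕ} (hab : a + 1 < b) :
    catalan (b - a - 1) = ∑ j ∈ Finset.Ioo a b, catalan (j - a - 1) * catalan (b - j - 1) := by
  obtain ⟨n, rfl⟩ : ∃ n, b = a + n + 2 := ⟨b - a - 2, by omega⟩
  rw [show a + n + 2 - a - 1 = n + 1 by omega, catalan_succ',
    Finset.Nat.sum_antidiagonal_eq_sum_range_succ_mk, ← Finset.Ico_add_one_left_eq_Ioo,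
    Finset.sum_Ico_eq_sum_range, show a + n + 2 - (a + 1) = n.succ by omega]
  refine Finset.sum_congr rfl fun i _ => ?_
  congr 2 <;> omega

theorem card_minimal_isSafeAtFamily (a b : ℕ) :
    Nat.card {S // Minimal (IsSafeAtFamily a b) S} = catalan (b - a - 1) := by
  induction h : b - a using Nat.strong_induction_on generalizing a b with
  | _ n ih =>
  subst h
  obtain hab | hab := le_or_gt b (a + 1)
  · rw [card_minimal_isSafeAtFamily_of_le hab, show b - a - 1 = 0 by omega, catalan_zero]
  have hcard : ∀ j : Finset.Ioo a b,
      Nat.card {L // Minimal (IsSafeAtFamily a j) L} = catalan (j - a - 1) ∧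
        Nat.card {R // Minimal (IsSafeAtFamily j b) R} = catalan (b - j - 1) := by
    intro j
    have hj := Finset.mem_Ioo.1 j.2
    exact ⟨ih _ (by omega) a j rfl, ih _ (by omega) j b rfl⟩
  have : ∀ j : Finset.Ioo a b, Finite
      ({L // Minimal (IsSafeAtFamily a j) L} × {R // Minimal (IsSafeAtFamily j b) R}) :=
    fun j =>
      have := Nat.finite_of_card_ne_zero ((hcard j).1 ▸ (catalan_pos _).ne')
      have := Nat.finite_of_card_ne_zero ((hcard j).2 ▸ (catalan_pos _).ne')
      inferInstance
  rw [← Nat.card_eq_of_bijective _ (glueMinimal_bijective hab), Nat.card_sigma,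
    catalan_eq_sum_Ioo hab, ← Finset.sum_coe_sort (Finset.Ioo a b)]
  exact Finset.sum_congr rfl fun j _ => by rw [Nat.card_prod, (hcard j).1, (hcard j).2]

section Chain

variable {k : ℕ}

def chainAtoms (k : ℕ) : Fin k → Finset (Fin (k + 1)) := fun i => {i.castSucc, i.succ}

def chainHead (k : ℕ) : Finset (Fin (k + 1)) := {0, Fin.last k}

lemma mem_chainAtoms {i : Fin k} {v : Fin (k + 1)} :
    v ∈ chainAtoms k i ↔ (v : ℕ) = i ∨ (v : ℕ) = i + 1 := by
  simp [chainAtoms, Fin.ext_iff]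

lemma notMem_chainHead {v : Fin (k + 1)} : v ∉ chainHead k ↔ (v : ℕ) ∈ Set.Ioo 0 k := by
  simp only [chainHead, Finset.mem_insert, Finset.mem_singleton, Fin.ext_iff, Fin.val_zero,
    Fin.val_last, Set.mem_Ioo]
  omega

lemma exists_notMem_chainHead {x : ℕ} (hx : x ∈ Set.Ioo 0 k) :
    ∃ v : Fin (k + 1), v ∉ chainHead k ∧ (v : ℕ) = x :=
  ⟨⟨x, by grind⟩, notMem_chainHead.2 hx, rfl⟩

lemma mem_varsOf_chainAtoms {v : Fin (k + 1)} (hv : v ∉ chainHead k) :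
    v ∈ varsOf (chainAtoms k) :=
  mem_varsOf.2 ⟨⟨v, (notMem_chainHead.1 hv).2⟩, mem_chainAtoms.2 (Or.inl rfl)⟩

/-- The at-sets `at(x)` of the existential variables `x` in the dissociated chain query `q^Δ`,
with atoms and variables read as natural numbers. -/
def atFamily (Δ : Fin k → Finset (Fin (k + 1))) : ℕ → Finset ℕ := fun x =>
  (Finset.univ.filter fun i : Fin k =>
    ∃ v ∈ dissAtoms (chainAtoms k) Δ i, v ∉ chainHead k ∧ (v : ℕ) = x).map Fin.valEmbedding

def dissOfAtFamily (k : ℕ) (S : ℕ → Finset ℕ) : Fin k → Finset (Fin (k + 1)) := fun i =>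
  Finset.univ.filter fun v => v ∉ chainHead k ∧ v ∉ chainAtoms k i ∧ (i : ℕ) ∈ S v

variable {Δ Δ' : Fin k → Finset (Fin (k + 1))} {S S' : ℕ → Finset ℕ}

lemma lt_of_mem_atFamily {x n : ℕ} (h : n ∈ atFamily Δ x) : n < k := by
  obtain ⟨i, -, rfl⟩ := Finset.mem_map.1 h
  exact i.2

lemma mem_atFamily_val {v : Fin (k + 1)} (hv : v ∉ chainHead k) {i : Fin k} :
    (i : ℕ) ∈ atFamily Δ v ↔ v ∈ dissAtoms (chainAtoms k) Δ i := by
  simp only [atFamily, Finset.mem_map, Finset.mem_filter, Finset.mem_univ, true_and,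
    Fin.valEmbedding_apply, Fin.val_inj, exists_eq_right]
  exact ⟨fun ⟨w, hw, _, hwv⟩ => hwv ▸ hw, fun h => ⟨v, h, hv, rfl⟩⟩

lemma atFamily_val {v : Fin (k + 1)} (hv : v ∉ chainHead k) :
    atFamily Δ v = (atOf (dissAtoms (chainAtoms k) Δ) Finset.univ v).map Fin.valEmbedding := by
  ext n
  refine ⟨fun hn => ?_, fun hn => ?_⟩
  · obtain ⟨i, rfl⟩ : ∃ i : Fin k, (i : ℕ) = n := ⟨⟨n, lt_of_mem_atFamily hn⟩, rfl⟩
    exact Finset.mem_map_of_mem _ (mem_atOf.2 ⟨Finset.mem_univ _, (mem_atFamily_val hv).1 hn⟩)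
  · obtain ⟨i, hi, rfl⟩ := Finset.mem_map.1 hn
    exact (mem_atFamily_val hv).2 (mem_atOf.1 hi).2

lemma atFamily_of_notMem {x : ℕ} (hx : x ∉ Set.Ioo 0 k) : atFamily Δ x = ∅ := by
  refine Finset.map_eq_empty.2 (Finset.filter_eq_empty_iff.2 fun i _ => ?_)
  rintro ⟨v, -, hv, rfl⟩
  exact hx (notMem_chainHead.1 hv)

lemma atFamily_mono (h : Δ ≤ Δ') : atFamily Δ ≤ atFamily Δ' := fun _ =>
  Finset.map_subset_map.2 <| Finset.monotone_filter_right _ fun i _ ⟨v, hv, hrest⟩ =>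
    ⟨v, mem_dissAtoms.2 ((mem_dissAtoms.1 hv).imp_right (h i ·)), hrest⟩

lemma mem_dissOfAtFamily {i : Fin k} {v : Fin (k + 1)} :
    v ∈ dissOfAtFamily k S i ↔ v ∉ chainHead k ∧ v ∉ chainAtoms k i ∧ (i : ℕ) ∈ S v := by
  simp [dissOfAtFamily]

lemma dissOfAtFamily_mono (h : S ≤ S') : dissOfAtFamily k S ≤ dissOfAtFamily k S' :=
  fun _ _ hv => by
    rw [mem_dissOfAtFamily] at hv ⊢
    exact ⟨hv.1, hv.2.1, h _ hv.2.2⟩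

lemma isDiss_dissOfAtFamily : IsDiss (chainAtoms k) (chainHead k) (dissOfAtFamily k S) := by
  intro i v hv
  rw [mem_dissOfAtFamily] at hv
  simp only [Finset.mem_sdiff]
  exact ⟨⟨mem_varsOf_chainAtoms hv.1, hv.1⟩, hv.2.1⟩

lemma isSafeAtFamily_atFamily_iff :
    IsSafeAtFamily 0 k (atFamily Δ) ↔
      HierOn (dissAtoms (chainAtoms k) Δ) Finset.univ (chainHead k) := by
  rw [hierOn_iff_disjoint]
  refine ⟨fun hS v hv w hw => ?_,
    fun hH => ⟨?_, ?_, ?_, fun x hx => atFamily_of_notMem hx, ?_⟩⟩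
  · have := hS.laminar v (notMem_chainHead.1 hv) w (notMem_chainHead.1 hw)
    rwa [atFamily_val hv, atFamily_val hw, Finset.map_subset_map, Finset.map_subset_map,
      Finset.disjoint_map] at this
  · intro x hx
    obtain ⟨v, hv, rfl⟩ := exists_notMem_chainHead hx
    obtain ⟨hv0, hvk⟩ := notMem_chainHead.1 hv
    refine (mem_atFamily_val hv (i := ⟨v - 1, by omega⟩)).2 (mem_dissAtoms.2 <| Or.inl ?_)
    exact mem_chainAtoms.2 (Or.inr (by simp only; omega))
  · intro x hx
    obtain ⟨v, hv, rfl⟩ := exists_notMem_chainHead hx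
    exact (mem_atFamily_val hv (i := ⟨v, hx.2⟩)).2
      (mem_dissAtoms.2 <| Or.inl (mem_chainAtoms.2 (Or.inl rfl)))
  · exact fun x _ n hn => Finset.mem_Ico.2 ⟨Nat.zero_le n, lt_of_mem_atFamily hn⟩
  · intro x hx y hy
    obtain ⟨v, hv, rfl⟩ := exists_notMem_chainHead hx
    obtain ⟨w, hw, rfl⟩ := exists_notMem_chainHead hy
    rw [atFamily_val hv, atFamily_val hw, Finset.map_subset_map, Finset.map_subset_map,
      Finset.disjoint_map]
    exact hH v hv w hw

lemma IsSafeAtFamily.val_mem_of_mem_chainAtoms (hS : IsSafeAtFamily 0 k S) {i : Fin k}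
    {v : Fin (k + 1)} (hv : v ∉ chainHead k) (hvi : v ∈ chainAtoms k i) : (i : ℕ) ∈ S v := by
  rcases mem_chainAtoms.1 hvi with h | h
  · exact h ▸ hS.self_mem v (notMem_chainHead.1 hv)
  · simpa [h] using hS.pred_mem v (notMem_chainHead.1 hv)

lemma atFamily_dissOfAtFamily (hS : IsSafeAtFamily 0 k S) : atFamily (dissOfAtFamily k S) = S := by
  funext x
  by_cases hx : x ∈ Set.Ioo 0 k
  swap
  · rw [atFamily_of_notMem hx, hS.eq_empty x hx]
  obtain ⟨v, hv, rfl⟩ := exists_notMem_chainHead hx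
  ext n
  refine ⟨fun hn => ?_, fun hn => ?_⟩
  · obtain ⟨i, rfl⟩ : ∃ i : Fin k, (i : ℕ) = n := ⟨⟨n, lt_of_mem_atFamily hn⟩, rfl⟩
    rw [mem_atFamily_val hv, mem_dissAtoms, mem_dissOfAtFamily] at hn
    exact hn.elim (hS.val_mem_of_mem_chainAtoms hv) fun h => h.2.2
  · obtain ⟨i, rfl⟩ : ∃ i : Fin k, (i : ℕ) = n :=
      ⟨⟨n, (Finset.mem_Ico.1 (hS.subset_Ico _ hx hn)).2⟩, rfl⟩
    rw [mem_atFamily_val hv, mem_dissAtoms, mem_dissOfAtFamily]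
    by_cases h : v ∈ chainAtoms k i
    exacts [Or.inl h, Or.inr ⟨hv, h, hn⟩]

lemma dissOfAtFamily_atFamily (hΔ : IsDiss (chainAtoms k) (chainHead k) Δ) :
    dissOfAtFamily k (atFamily Δ) = Δ := by
  funext i
  ext v
  rw [mem_dissOfAtFamily]
  refine ⟨fun ⟨hv, hvi, hmem⟩ => ?_, fun hv => ?_⟩
  · exact (mem_dissAtoms.1 ((mem_atFamily_val hv).1 hmem)).resolve_left hvi
  · have hv' := hΔ i hv
    simp only [Finset.mem_sdiff] at hv'
    exact ⟨hv'.1.2, hv'.2, (mem_atFamily_val hv'.1.2).2 (mem_dissAtoms.2 (Or.inr hv))⟩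

def safeDissOrderIso (k : ℕ) :
    {Δ | SafeDiss (chainAtoms k) (chainHead k) Δ} ≃o {S | IsSafeAtFamily 0 k S} where
  toFun Δ := ⟨atFamily Δ.1, isSafeAtFamily_atFamily_iff.2 Δ.2.2⟩
  invFun S := ⟨dissOfAtFamily k S.1, isDiss_dissOfAtFamily,
    isSafeAtFamily_atFamily_iff.1 ((atFamily_dissOfAtFamily S.2).symm ▸ S.2)⟩
  left_inv Δ := Subtype.ext (dissOfAtFamily_atFamily Δ.2.1)
  right_inv S := Subtype.ext (atFamily_dissOfAtFamily S.2)
  map_rel_iff' {Δ Δ'} := by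
    refine ⟨fun h => ?_, atFamily_mono⟩
    have := dissOfAtFamily_mono (k := k) (S := atFamily Δ.1) (S' := atFamily Δ'.1) h
    rwa [dissOfAtFamily_atFamily Δ.2.1, dissOfAtFamily_atFamily Δ'.2.1] at this

theorem ncard_minSafeDiss_chain (k : ℕ) :
    {Δ | MinSafeDiss (chainAtoms k) (chainHead k) Δ}.ncard = catalan (k - 1) := by
  simp only [minSafeDiss_iff_minimal]
  exact (Nat.card_congr (safeDissOrderIso k).mapSetOfPredMinimal.toEquiv).trans
    (card_minimal_isSafeAtFamily 0 k)

end Chain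

/-- Number of minimal plans of chain queries.  For every `k ≥ 2`, the
`k`-chain query `q(x_0,x_k) :- R_1(x_0,x_1), …, R_k(x_{k−1},x_k)` (whose head variables
`x_0` and `x_k` are treated as constants) has exactly `C_{k−1}` minimal safe dissociations
(equivalently, minimal query plans), where `C_n` is the `n`-th Catalan number; in
particular, the `8`-chain query has `429` of them. -/
theorem chain_query_minimal_dissociation_count :
    (∀ k : ℕ, 2 ≤ k →
      {Δ : Fin k → Finset (Fin (k + 1)) |
          MinSafeDiss (fun i : Fin k => {i.castSucc, i.succ})
            ({0, Fin.last k} : Finset (Fin (k + 1))) Δ}.ncard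
        = catalan (k - 1)) ∧
    {Δ : Fin 8 → Finset (Fin 9) |
        MinSafeDiss (fun i : Fin 8 => {i.castSucc, i.succ})
          ({0, Fin.last 8} : Finset (Fin 9)) Δ}.ncard = 429 :=
  ⟨fun k _ => ncard_minSafeDiss_chain k,
    (ncard_minSafeDiss_chain 8).trans (by rw [catalan_eq_centralBinom_div]; rfl)⟩

end

end PDB
end
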